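/- arXiv:2306.16677 — 7 statements merged into one kernel-verified Lean document; each statement's English description precedes it below -/
import Mathlib

section
/- Let n ≥ 3 be an integer. If the generalized quaternion group Q_{4n} of order 4n is a DCI-group, then n is odd and squarefree. -/
/-- The arc relation of the Cayley digraph `Cay(G,S)`: arcs are `(g, s*g)` for `s ∈ S`. -/
def CayleyArc {G : Type*} [Group G] (S : Set G) (u v : G) : Prop :=
  ∃ s ∈ S, v = s * u

/-- The Cayley digraphs `Cay(G,S)` and `Cay(G,T)` are isomorphic: there is a bijection
of the vertex set `G` mapping arcs to arcs in both directions. -/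
def CayleyIso {G : Type*} [Group G] (S T : Set G) : Prop :=
  ∃ e : G ≃ G, ∀ u v : G, CayleyArc S u v ↔ CayleyArc T (e u) (e v)

/-- `S` is a CI-subset of `G`: any Cayley digraph isomorphism `Cay(G,S) ≅ Cay(G,T)`
(with `1 ∉ T`) is realized by a group automorphism sending `S` to `T`. -/
def IsCISubset {G : Type*} [Group G] (S : Set G) : Prop :=
  ∀ T : Set G, (1 : G) ∉ T → CayleyIso S T → ∃ σ : G ≃* G, ⇑σ '' S = T

/-- `G` has the `m`-DCI property: every `S ⊆ G` with `1 ∉ S` and `|S| = m` is a CI-subset. -/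
def HasDCIProperty (G : Type*) [Group G] (m : ℕ) : Prop :=
  ∀ S : Set G, (1 : G) ∉ S → S.ncard = m → IsCISubset S

open Subgroup in
lemma exists_conj_equiv {G : Type*} [Group G] [Finite G] {x y : G}
    (h : orderOf x = orderOf y) : ∃ e : G ≃ G, ∀ u : G, e (x * u) = y * e u := by
  classical
  set H := Subgroup.zpowers x with hHdef
  set K := Subgroup.zpowers y with hKdef
  set ψ : (H : Set G) ≃ (K : Set G) := zpowersEquivZPowers h with hψdef
  have hψ : ∀ k : ℕ, (ψ ⟨x ^ k, ⟨k, zpow_natCast x k⟩⟩ : G) = y ^ k := by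
    intro k
    rw [hψdef, zpowersEquivZPowers_apply]
  have key : ∀ (g g' : G) (hg : g ∈ H) (hg' : g' ∈ H), g' = g * x →
      (ψ ⟨g', hg'⟩ : G) = (ψ ⟨g, hg⟩ : G) * y := by
    intro g g' hg hg' hrel
    subst hrel
    obtain ⟨k, hk⟩ := (Submonoid.mem_powers_iff g x).mp (mem_powers_iff_mem_zpowers.mpr hg)
    subst hk
    have e1 : (⟨x ^ k * x, hg'⟩ : (H : Set G)) = ⟨x ^ (k+1), ⟨k+1, zpow_natCast x (k+1)⟩⟩ :=
      Subtype.ext (pow_succ x k).symm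
    have e2 : (⟨x ^ k, hg⟩ : (H : Set G)) = ⟨x ^ k, ⟨k, zpow_natCast x k⟩⟩ := rfl
    rw [e1, e2, hψ, hψ, pow_succ]
  -- quotient equivalence
  have hqcard : Nat.card (G ⧸ H) = Nat.card (G ⧸ K) := by
    have h1 := Subgroup.card_eq_card_quotient_mul_card_subgroup H
    have h2 := Subgroup.card_eq_card_quotient_mul_card_subgroup K
    have hH : Nat.card H = orderOf x := Nat.card_zpowers x
    have hK : Nat.card K = orderOf y := Nat.card_zpowers y
    have hpos : 0 < orderOf y := by
      have : IsOfFinOrder y := isOfFinOrder_of_finite y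
      exact this.orderOf_pos
    apply Nat.eq_of_mul_eq_mul_right hpos
    calc Nat.card (G ⧸ H) * orderOf y = Nat.card (G ⧸ H) * Nat.card H := by rw [hH, h]
      _ = Nat.card G := h1.symm
      _ = Nat.card (G ⧸ K) * Nat.card K := h2
      _ = Nat.card (G ⧸ K) * orderOf y := by rw [hK]
  obtain ⟨qe⟩ : Nonempty ((G ⧸ H) ≃ (G ⧸ K)) := Finite.card_eq.mp hqcard
  have hmem : ∀ g : G, ((QuotientGroup.mk g : G ⧸ H).out)⁻¹ * g ∈ H := by
    intro g
    rw [← QuotientGroup.eq]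
    exact QuotientGroup.out_eq' _
  set F : G → G := fun g =>
    (qe (QuotientGroup.mk g)).out * (ψ ⟨((QuotientGroup.mk g : G ⧸ H).out)⁻¹ * g, hmem g⟩ : G)
    with hFdef
  have hFmk : ∀ g : G, (QuotientGroup.mk (F g) : G ⧸ K) = qe (QuotientGroup.mk g) := by
    intro g
    rw [hFdef]
    simp only
    rw [QuotientGroup.mk_mul_of_mem _ (ψ _).2, QuotientGroup.out_eq']
  have hFinj : Function.Injective F := by
    intro g1 g2 hg
    have hq : qe (QuotientGroup.mk g1) = qe (QuotientGroup.mk g2) := by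
      rw [← hFmk, ← hFmk, hg]
    have hq' : (QuotientGroup.mk g1 : G ⧸ H) = QuotientGroup.mk g2 := qe.injective hq
    rw [hFdef] at hg
    simp only [hq'] at hg
    have := mul_left_cancel hg
    have := ψ.injective (Subtype.ext this)
    have := congrArg Subtype.val this
    simp only [hq'] at this ⊢
    exact mul_left_cancel this
  have hFx : ∀ g : G, F (g * x) = F g * y := by
    intro g
    have hq : (QuotientGroup.mk (g * x) : G ⧸ H) = QuotientGroup.mk g :=
      QuotientGroup.mk_mul_of_mem g (Subgroup.mem_zpowers x)
    rw [hFdef]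
    simp only [hq]
    rw [mul_assoc]
    congr 1
    exact key _ _ (hmem g) _ (mul_assoc _ _ _).symm
  set E0 : G ≃ G := Equiv.ofBijective F (Finite.injective_iff_bijective.mp hFinj) with hE0
  refine ⟨(Equiv.inv G).trans (E0.trans (Equiv.inv G)), fun u => ?_⟩
  have hF : ∀ g : G, E0 g = F g := fun g => rfl
  simp only [Equiv.trans_apply, Equiv.inv_apply, hF]
  have h5 : F (u⁻¹ * x⁻¹) = F u⁻¹ * y⁻¹ := by
    have h6 := hFx (u⁻¹ * x⁻¹)
    rw [inv_mul_cancel_right] at h6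
    rw [h6, mul_inv_cancel_right]
  conv_lhs => rw [mul_inv_rev x u]
  rw [h5, mul_inv_rev, inv_inv]

lemma singleton_cayleyIso {G : Type*} [Group G] [Finite G] {x y : G}
    (h : orderOf x = orderOf y) : CayleyIso {x} {y} := by
  obtain ⟨e, he⟩ := exists_conj_equiv h
  refine ⟨e, fun u v => ?_⟩
  have arc1 : ∀ (z u v : G), CayleyArc {z} u v ↔ v = z * u := by
    intro z u v
    constructor
    · rintro ⟨s, hs, rfl⟩
      rw [Set.mem_singleton_iff] at hs
      rw [hs]
    · rintro rfl
      exact ⟨z, rfl, rfl⟩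
  rw [arc1, arc1]
  constructor
  · rintro rfl
    rw [he u]
  · intro hv
    exact e.injective (hv.trans (he u).symm)

open QuaternionGroup in
lemma quaternion_even_case (n : ℕ) (hn : 3 ≤ n) (h2 : 2 ∣ n)
    (hDCI : ∀ m : ℕ, 1 ≤ m → m ≤ Nat.card (QuaternionGroup n) →
      HasDCIProperty (QuaternionGroup n) m) : False := by
  haveI : NeZero n := ⟨by omega⟩
  obtain ⟨t, ht⟩ := h2
  have ht2 : 2 ≤ t := by omega
  set c : ZMod (2 * n) := ((t : ℕ) : ZMod (2 * n)) with hc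
  have hvt : c.val = t := ZMod.val_cast_of_lt (by omega)
  have hordc : orderOf (a c : QuaternionGroup n) = 4 := by
    rw [QuaternionGroup.orderOf_a, hvt]
    have hg : Nat.gcd (2 * n) t = t := Nat.gcd_eq_right ⟨4, by omega⟩
    rw [hg]
    have h4 : 2 * n = t * 4 := by omega
    rw [h4, Nat.mul_div_cancel_left _ (by omega : 0 < t)]
  have hiso : CayleyIso {(a c : QuaternionGroup n)} {(xa 0 : QuaternionGroup n)} :=
    singleton_cayleyIso (by rw [hordc, QuaternionGroup.orderOf_xa])
  have hS1 : (1 : QuaternionGroup n) ∉ ({a c} : Set (QuaternionGroup n)) := by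
    rw [Set.mem_singleton_iff, QuaternionGroup.one_def]
    intro h
    have h0 : (0 : ZMod (2 * n)) = c := by injection h
    have := congrArg ZMod.val h0
    rw [hvt, ZMod.val_zero] at this
    omega
  have hT1 : (1 : QuaternionGroup n) ∉ ({xa 0} : Set (QuaternionGroup n)) := by
    rw [Set.mem_singleton_iff, QuaternionGroup.one_def]
    intro h
    cases h
  have hcard : Nat.card (QuaternionGroup n) = 4 * n := by
    rw [Nat.card_eq_fintype_card, QuaternionGroup.card]
  obtain ⟨σ, hσ⟩ := hDCI 1 le_rfl (by rw [hcard]; omega) {a c} hS1 (Set.ncard_singleton _)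
    {xa 0} hT1 hiso
  rw [Set.image_singleton, Set.singleton_eq_singleton_iff] at hσ
  have hcomm : (a 1 : QuaternionGroup n) * a c = a c * a 1 := by
    rw [QuaternionGroup.a_mul_a, QuaternionGroup.a_mul_a, add_comm]
  have hcomm2 : σ (a 1) * xa 0 = xa 0 * σ (a 1) := by
    have h3 := congrArg σ hcomm
    rw [map_mul, map_mul, hσ] at h3
    exact h3
  have hord1 : orderOf (σ (a 1)) = 2 * n := by
    have h4 := orderOf_injective σ.toMonoidHom σ.injective (a 1)
    simp only [MulEquiv.coe_toMonoidHom] at h4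
    rw [h4, QuaternionGroup.orderOf_a_one]
  cases hw : σ (a 1 : QuaternionGroup n) with
  | xa j =>
    rw [hw, QuaternionGroup.orderOf_xa] at hord1
    omega
  | a j =>
    rw [hw] at hcomm2 hord1
    rw [QuaternionGroup.a_mul_xa, QuaternionGroup.xa_mul_a] at hcomm2
    have hj : (0 : ZMod (2*n)) - j = 0 + j := by injection hcomm2
    have hjj : j + j = 0 := by linear_combination -hj
    have hpow : (a j : QuaternionGroup n) ^ 2 = 1 := by
      rw [sq, QuaternionGroup.a_mul_a, hjj, QuaternionGroup.one_def]
    have hdvd := orderOf_dvd_of_pow_eq_one hpow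
    rw [hord1] at hdvd
    have := Nat.le_of_dvd (by norm_num) hdvd
    omega

section Phi

variable (n p : ℕ)

open QuaternionGroup in
lemma quaternion_odd_sq_case (hn : 3 ≤ n) (hp : p.Prime) (hp3 : 3 ≤ p) (hdvd : p * p ∣ n)
    (hDCI : ∀ m : ℕ, 1 ≤ m → m ≤ Nat.card (QuaternionGroup n) →
      HasDCIProperty (QuaternionGroup n) m) : False := by
  haveI : NeZero n := ⟨by omega⟩
  haveI : NeZero (2 * n) := ⟨by omega⟩
  obtain ⟨m₀, hm₀⟩ := hdvd
  have hm1 : 1 ≤ m₀ := by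
    rcases Nat.eq_zero_or_pos m₀ with h | h
    · exfalso; rw [h, mul_zero] at hm₀; omega
    · omega
  obtain ⟨m, d, hm0, hdpos, hpm, hdp⟩ :
      ∃ m d : ℕ, 1 ≤ m ∧ 0 < d ∧ p * m = d ∧ d * p = 2 * n :=
    ⟨2 * m₀, p * (2 * m₀), by omega, Nat.mul_pos (by omega) (by omega), rfl,
      by rw [hm₀]; ring⟩
  have hdltN : d < 2 * n := by
    have h1 : d * 1 < d * p := mul_lt_mul_of_pos_left (by omega) hdpos
    rw [hdp] at h1; omega
  have h2dltN : d + d < 2 * n := by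
    have h1 : d * 2 < d * p := mul_lt_mul_of_pos_left (by omega) hdpos
    rw [hdp] at h1; omega
  have hz : ∀ B : ℕ, ((2 * n * B : ℕ) : ZMod (2 * n)) = 0 := fun B => by
    rw [Nat.cast_mul, ZMod.natCast_self, zero_mul]
  -- ZMod constants
  set D : ZMod (2 * n) := ((d : ℕ) : ZMod (2 * n)) with hD
  set c : ZMod (2 * n) := ((m : ℕ) : ZMod (2 * n)) with hc
  have hDne : D ≠ 0 := by
    rw [hD]
    intro h
    have h1 := (ZMod.natCast_eq_zero_iff d (2 * n)).mp h
    have := Nat.le_of_dvd hdpos h1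
    omega
  have hDDne : D + D ≠ 0 := by
    rw [hD, ← Nat.cast_add]
    intro h
    have h1 := (ZMod.natCast_eq_zero_iff (d + d) (2 * n)).mp h
    have := Nat.le_of_dvd (by omega) h1
    omega
  have hpc : ((p : ℕ) : ZMod (2 * n)) * c = D := by
    rw [hc, hD, ← Nat.cast_mul, hpm]
  have hpD : ((p : ℕ) : ZMod (2 * n)) * D = 0 := by
    rw [hD, ← Nat.cast_mul, Nat.mul_comm p d, hdp, ZMod.natCast_self]
  -- odd prime halving
  have hpodd : p % 2 = 1 := by
    rcases Nat.Prime.eq_two_or_odd hp with h | h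
    · omega
    · exact h
  set t0 : ℕ := (p + 1) / 2 with ht0
  have h2t : 2 * t0 = p + 1 := by omega
  -- the index functions
  set f : ℕ → ℕ := fun x => x % d + d * ((2 * (x / d)) % p) with hf
  set g : ℕ → ℕ := fun y => y % d + d * ((t0 * (y / d)) % p) with hg
  have hcastd : ∀ A : ℕ, ((d * (A % p) : ℕ) : ZMod (2 * n)) = ((d * A : ℕ) : ZMod (2 * n)) := by
    intro A
    conv_rhs => rw [← Nat.div_add_mod A p]
    have h1 : d * (p * (A / p) + A % p) = 2 * n * (A / p) + d * (A % p) := by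
      rw [← hdp]; ring
    rw [h1, Nat.cast_add, hz, zero_add]
  have hfb : ∀ x : ℕ, f x < 2 * n := by
    intro x
    have h1 : x % d < d := Nat.mod_lt _ hdpos
    have h2 : (2 * (x / d)) % p < p := Nat.mod_lt _ (by omega)
    calc f x < d + d * ((2 * (x / d)) % p) := Nat.add_lt_add_right h1 _
      _ = d * (1 + (2 * (x / d)) % p) := by ring
      _ ≤ d * p := Nat.mul_le_mul_left _ (by omega)
      _ = 2 * n := hdp
  have hgb : ∀ y : ℕ, g y < 2 * n := by
    intro y
    have h1 : y % d < d := Nat.mod_lt _ hdpos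
    have h2 : (t0 * (y / d)) % p < p := Nat.mod_lt _ (by omega)
    calc g y < d + d * ((t0 * (y / d)) % p) := Nat.add_lt_add_right h1 _
      _ = d * (1 + (t0 * (y / d)) % p) := by ring
      _ ≤ d * p := Nat.mul_le_mul_left _ (by omega)
      _ = 2 * n := hdp
  have hcomp : ∀ u v x : ℕ, (u * v) % p = 1 % p →
      ((x % d + d * ((u * ((v * (x / d)) % p)) % p) : ℕ) : ZMod (2 * n)) = (x : ZMod (2 * n)) := by
    intro u v x huv
    have e1 : ((d * ((u * ((v * (x / d)) % p)) % p) : ℕ) : ZMod (2 * n))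
        = ((d * (u * (v * (x / d))) : ℕ) : ZMod (2 * n)) := by
      calc ((d * ((u * ((v * (x / d)) % p)) % p) : ℕ) : ZMod (2 * n))
          = ((d * (u * ((v * (x / d)) % p)) : ℕ) : ZMod (2 * n)) := hcastd _
        _ = (u : ZMod (2 * n)) * ((d * ((v * (x / d)) % p) : ℕ) : ZMod (2 * n)) := by
            push_cast; ring
        _ = (u : ZMod (2 * n)) * ((d * (v * (x / d)) : ℕ) : ZMod (2 * n)) := by rw [hcastd]
        _ = ((d * (u * (v * (x / d))) : ℕ) : ZMod (2 * n)) := by push_cast; ring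
    have h1p : (1 : ℕ) % p = 1 := Nat.mod_eq_of_lt (by omega)
    have huv' : u * v = p * ((u * v) / p) + 1 := by
      conv_lhs => rw [← Nat.div_add_mod (u * v) p]
      rw [huv, h1p]
    have e2 : ((d * (u * (v * (x / d))) : ℕ) : ZMod (2 * n))
        = ((d * (x / d) : ℕ) : ZMod (2 * n)) := by
      have h3 : d * (u * (v * (x / d))) = 2 * n * ((u * v) / p * (x / d)) + d * (x / d) := by
        calc d * (u * (v * (x / d))) = (u * v) * (d * (x / d)) := by ring
          _ = (p * ((u * v) / p) + 1) * (d * (x / d)) := by rw [← huv']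
          _ = (d * p) * ((u * v) / p * (x / d)) + d * (x / d) := by ring
          _ = 2 * n * ((u * v) / p * (x / d)) + d * (x / d) := by rw [hdp]
      rw [h3, Nat.cast_add, hz, zero_add]
    rw [Nat.cast_add, e1, e2, ← Nat.cast_add, Nat.mod_add_div]
  have hval : ∀ i : ZMod (2 * n), ((i.val : ℕ) : ZMod (2 * n)) = i := fun i =>
    ZMod.natCast_zmod_val i
  -- the equivalence Φ
  set Φ : ZMod (2 * n) ≃ ZMod (2 * n) :=
    { toFun := fun i => ((f i.val : ℕ) : ZMod (2 * n))
      invFun := fun j => ((g j.val : ℕ) : ZMod (2 * n))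
      left_inv := by
        intro i
        simp only
        rw [ZMod.val_cast_of_lt (hfb _)]
        have hmod : f i.val % d = i.val % d := by
          rw [hf]; simp only
          rw [Nat.add_mul_mod_self_left, Nat.mod_mod_of_dvd _ dvd_rfl]
        have hdiv : f i.val / d = (2 * (i.val / d)) % p := by
          rw [hf]; simp only
          rw [Nat.add_mul_div_left _ _ hdpos, Nat.div_eq_of_lt (Nat.mod_lt _ hdpos), zero_add]
        have hgf : g (f i.val) = i.val % d + d * ((t0 * ((2 * (i.val / d)) % p)) % p) := by
          rw [hg]; simp only
          rw [hmod, hdiv]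
        rw [hgf]
        have ht2 : (t0 * 2) % p = 1 % p := by
          have h5 : t0 * 2 = p + 1 := by omega
          rw [h5, Nat.add_mod_left]
        rw [hcomp t0 2 i.val ht2, hval]
      right_inv := by
        intro j
        simp only
        rw [ZMod.val_cast_of_lt (hgb _)]
        have hmod : g j.val % d = j.val % d := by
          rw [hg]; simp only
          rw [Nat.add_mul_mod_self_left, Nat.mod_mod_of_dvd _ dvd_rfl]
        have hdiv : g j.val / d = (t0 * (j.val / d)) % p := by
          rw [hg]; simp only
          rw [Nat.add_mul_div_left _ _ hdpos, Nat.div_eq_of_lt (Nat.mod_lt _ hdpos), zero_add]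
        have hfg : f (g j.val) = j.val % d + d * ((2 * ((t0 * (j.val / d)) % p)) % p) := by
          rw [hf]; simp only
          rw [hmod, hdiv]
        rw [hfg]
        have ht2 : (2 * t0) % p = 1 % p := by
          rw [h2t, Nat.add_mod_left]
        rw [hcomp 2 t0 j.val ht2, hval] } with hΦ
  have hΦapp : ∀ i : ZMod (2 * n), Φ i = ((f i.val : ℕ) : ZMod (2 * n)) := fun _ => rfl
  have P0 : ∀ i : ZMod (2 * n), Φ i = i + D * ((i.val / d : ℕ) : ZMod (2 * n)) := by
    intro i
    rw [hΦapp i, hf]; simp only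
    rw [Nat.cast_add, hcastd]
    have h9 : (i : ZMod (2 * n)) = ((i.val % d : ℕ) : ZMod (2 * n))
        + ((d : ℕ) : ZMod (2 * n)) * ((i.val / d : ℕ) : ZMod (2 * n)) := by
      conv_lhs => rw [← hval i, ← Nat.mod_add_div i.val d]
      push_cast
      ring
    push_cast
    linear_combination (-1 : ZMod (2 * n)) * h9 - ((i.val / d : ℕ) : ZMod (2 * n)) * hD
  have P2 : ∀ i : ZMod (2 * n), Φ (i + D) = Φ i + (D + D) := by
    intro i
    rw [P0 i, P0 (i + D)]
    have hx := ZMod.val_lt i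
    by_cases hcase : i.val + d < 2 * n
    · have hv : (i + D).val = i.val + d := by
        rw [hD]
        conv_lhs => rw [← hval i, ← Nat.cast_add]
        exact ZMod.val_cast_of_lt hcase
      rw [hv, Nat.add_div_right _ hdpos]
      push_cast
      ring
    · have hpd2n : p * d = 2 * n := by rw [Nat.mul_comm, hdp]
      have hub : i.val / d < p := (Nat.div_lt_iff_lt_mul hdpos).mpr (by rw [hpd2n]; exact hx)
      have hlb : p - 1 ≤ i.val / d := by
        apply (Nat.le_div_iff_mul_le hdpos).mpr
        have he : (p - 1) * d = p * d - d := by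
          rw [Nat.sub_mul, one_mul]
        omega
      have hxd : i.val / d = p - 1 := by omega
      have hv : (i + D).val = i.val + d - 2 * n := by
        have h6 : i + D = ((i.val + d - 2 * n : ℕ) : ZMod (2 * n)) := by
          rw [hD]
          conv_lhs => rw [← hval i, ← Nat.cast_add]
          have h7 : i.val + d = i.val + d - 2 * n + 2 * n := by omega
          conv_lhs => rw [h7]
          rw [Nat.cast_add, ZMod.natCast_self, add_zero]
        rw [h6]
        exact ZMod.val_cast_of_lt (by omega)
      rw [hv, hxd, Nat.div_eq_of_lt (by omega)]
      have hc1 : ((p - 1 : ℕ) : ZMod (2 * n)) + 1 = ((p : ℕ) : ZMod (2 * n)) := by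
        have h9 : p - 1 + 1 = p := by omega
        calc ((p - 1 : ℕ) : ZMod (2 * n)) + 1
            = ((p - 1 + 1 : ℕ) : ZMod (2 * n)) := by push_cast; ring
          _ = _ := by rw [h9]
      rw [Nat.cast_zero, mul_zero, add_zero]
      linear_combination (-D) * hc1 - hpD
  have D1 : ∀ i i' : ZMod (2 * n),
      (∃ k, c + D * k = i' - i) ↔ (∃ k, c + D * k = Φ i' - Φ i) := by
    intro i i'
    constructor
    · rintro ⟨k, hk⟩
      refine ⟨k + ((i'.val / d : ℕ) : ZMod (2 * n)) - ((i.val / d : ℕ) : ZMod (2 * n)), ?_⟩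
      rw [P0 i, P0 i']
      linear_combination hk
    · rintro ⟨k, hk⟩
      refine ⟨k - ((i'.val / d : ℕ) : ZMod (2 * n)) + ((i.val / d : ℕ) : ZMod (2 * n)), ?_⟩
      rw [P0 i, P0 i'] at hk
      linear_combination hk
  have D2 : ∀ i i' : ZMod (2 * n), (i' - i = D) ↔ (Φ i' - Φ i = D + D) := by
    intro i i'
    constructor
    · intro h
      have h1 : i' = i + D := by linear_combination h
      rw [h1, P2 i]
      ring
    · intro h
      have h1 : Φ i' = Φ (i + D) := by rw [P2 i]; linear_combination h
      have h2 := Φ.injective h1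
      rw [h2]
      ring
  -- connection sets
  set C : Set (ZMod (2 * n)) := Set.range (fun k : ZMod (2 * n) => c + D * k) with hC
  set IS : Set (ZMod (2 * n)) := C ∪ {D} with hIS
  set IT : Set (ZMod (2 * n)) := C ∪ {D + D} with hIT
  have keyA : ∀ i i' : ZMod (2 * n), i' - i ∈ IS ↔ Φ i' - Φ i ∈ IT := by
    intro i i'
    rw [hIS, hIT, Set.mem_union, Set.mem_union, Set.mem_singleton_iff, Set.mem_singleton_iff,
      hC, Set.mem_range, Set.mem_range]
    exact or_congr (D1 i i') (D2 i i')
  have ainj : Function.Injective (QuaternionGroup.a : ZMod (2 * n) → QuaternionGroup n) := by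
    intro i j h
    injection h
  set S : Set (QuaternionGroup n) := QuaternionGroup.a '' IS with hS
  set T : Set (QuaternionGroup n) := QuaternionGroup.a '' IT with hT
  have harc : ∀ (I : Set (ZMod (2 * n))) (u v : QuaternionGroup n),
      CayleyArc (QuaternionGroup.a '' I) u v ↔ ∃ j ∈ I, v = QuaternionGroup.a j * u := by
    intro I u v
    constructor
    · rintro ⟨s, ⟨j, hj, rfl⟩, hv⟩; exact ⟨j, hj, hv⟩
    · rintro ⟨j, hj, hv⟩; exact ⟨_, ⟨j, hj, rfl⟩, hv⟩
  have harcA : ∀ (I : Set (ZMod (2 * n))) (i i' : ZMod (2 * n)),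
      (∃ j ∈ I, QuaternionGroup.a i' = QuaternionGroup.a j * QuaternionGroup.a i) ↔
        i' - i ∈ I := by
    intro I i i'
    constructor
    · rintro ⟨j, hj, hv⟩
      rw [QuaternionGroup.a_mul_a] at hv
      have h2 : i' = j + i := by injection hv
      have h3 : i' - i = j := by linear_combination h2
      rw [h3]; exact hj
    · intro h
      exact ⟨i' - i, h, by rw [QuaternionGroup.a_mul_a]; congr 1; ring⟩
  have harcX : ∀ (I : Set (ZMod (2 * n))) (i i' : ZMod (2 * n)),
      (∃ j ∈ I, QuaternionGroup.xa i' = QuaternionGroup.a j * QuaternionGroup.xa i) ↔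
        i - i' ∈ I := by
    intro I i i'
    constructor
    · rintro ⟨j, hj, hv⟩
      rw [QuaternionGroup.a_mul_xa] at hv
      have h2 : i' = i - j := by injection hv
      have h3 : i - i' = j := by linear_combination -h2
      rw [h3]; exact hj
    · intro h
      exact ⟨i - i', h, by rw [QuaternionGroup.a_mul_xa]; congr 1; ring⟩
  set e : QuaternionGroup n ≃ QuaternionGroup n :=
    { toFun := fun u => match u with
        | .a i => .a (Φ i)
        | .xa i => .xa (Φ i)
      invFun := fun u => match u with
        | .a i => .a (Φ.symm i)
        | .xa i => .xa (Φ.symm i)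
      left_inv := by rintro (i | i) <;> simp
      right_inv := by rintro (i | i) <;> simp } with he
  have hea : ∀ i, e (QuaternionGroup.a i) = QuaternionGroup.a (Φ i) := fun _ => rfl
  have hexa : ∀ i, e (QuaternionGroup.xa i) = QuaternionGroup.xa (Φ i) := fun _ => rfl
  have hiso : CayleyIso S T := by
    refine ⟨e, fun u v => ?_⟩
    rw [hS, hT]
    rcases u with i | i <;> rcases v with i' | i'
    · rw [hea, hea, harc, harc, harcA, harcA]
      exact keyA i i'
    · rw [hea, hexa, harc, harc]
      constructor
      · rintro ⟨j, hj, hv⟩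
        rw [QuaternionGroup.a_mul_a] at hv
        cases hv
      · rintro ⟨j, hj, hv⟩
        rw [QuaternionGroup.a_mul_a] at hv
        cases hv
    · rw [hexa, hea, harc, harc]
      constructor
      · rintro ⟨j, hj, hv⟩
        rw [QuaternionGroup.a_mul_xa] at hv
        cases hv
      · rintro ⟨j, hj, hv⟩
        rw [QuaternionGroup.a_mul_xa] at hv
        cases hv
    · rw [hexa, hexa, harc, harc, harcX, harcX]
      exact keyA i' i
  have hS1 : (1 : QuaternionGroup n) ∉ S := by
    rw [hS]
    rintro ⟨i, hi, hone⟩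
    have h0 : i = 0 := ainj (by rw [← QuaternionGroup.one_def]; exact hone)
    subst h0
    rw [hIS, Set.mem_union, Set.mem_singleton_iff, hC, Set.mem_range] at hi
    rcases hi with ⟨k, hk⟩ | hk
    · exact hDne (by linear_combination ((p : ℕ) : ZMod (2 * n)) * hk - hpc - k * hpD)
    · exact hDne hk.symm
  have hT1 : (1 : QuaternionGroup n) ∉ T := by
    rw [hT]
    rintro ⟨i, hi, hone⟩
    have h0 : i = 0 := ainj (by rw [← QuaternionGroup.one_def]; exact hone)
    subst h0
    rw [hIT, Set.mem_union, Set.mem_singleton_iff, hC, Set.mem_range] at hi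
    rcases hi with ⟨k, hk⟩ | hk
    · exact hDne (by linear_combination ((p : ℕ) : ZMod (2 * n)) * hk - hpc - k * hpD)
    · exact hDDne hk.symm
  have hSfin : S.Finite := Set.toFinite S
  have hSne : S.Nonempty :=
    ⟨QuaternionGroup.a D, Set.mem_image_of_mem _ (Set.mem_union_right _ rfl)⟩
  have h1m : 1 ≤ S.ncard := (Set.ncard_pos hSfin).mpr hSne
  have hmB : S.ncard ≤ Nat.card (QuaternionGroup n) := by
    rw [← Set.ncard_univ]
    exact Set.ncard_le_ncard (Set.subset_univ S) Set.finite_univ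
  obtain ⟨σ, hσ⟩ := hDCI S.ncard h1m hmB S hS1 rfl T hT1 hiso
  have hord : orderOf (σ (QuaternionGroup.a 1)) = 2 * n := by
    have h4 := orderOf_injective σ.toMonoidHom σ.injective (QuaternionGroup.a 1)
    simp only [MulEquiv.coe_toMonoidHom] at h4
    rw [h4, QuaternionGroup.orderOf_a_one]
  cases hw : σ (QuaternionGroup.a 1) with
  | xa j => rw [hw, QuaternionGroup.orderOf_xa] at hord; omega
  | a r =>
    rw [hw] at hord
    have hapow : ∀ (j : ZMod (2 * n)) (k : ℕ),
        (QuaternionGroup.a j : QuaternionGroup n) ^ k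
          = QuaternionGroup.a ((k : ZMod (2 * n)) * j) := by
      intro j k
      induction k with
      | zero => rw [pow_zero, Nat.cast_zero, zero_mul, QuaternionGroup.one_def]
      | succ k ih =>
        rw [pow_succ, ih, QuaternionGroup.a_mul_a]
        congr 1
        push_cast
        ring
    have hσa : ∀ i : ZMod (2 * n),
        σ (QuaternionGroup.a i) = QuaternionGroup.a (i * r) := by
      intro i
      have h5 : QuaternionGroup.a i = (QuaternionGroup.a 1 : QuaternionGroup n) ^ i.val := by
        rw [QuaternionGroup.a_one_pow, hval]
      rw [h5, map_pow, hw, hapow]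
      congr 1
      rw [hval]
    have hDr : D * r ≠ 0 := by
      intro h0
      have h6 : (QuaternionGroup.a r : QuaternionGroup n) ^ d = 1 := by
        rw [hapow, ← hD, h0, QuaternionGroup.one_def]
      have h7 := orderOf_dvd_of_pow_eq_one h6
      rw [hord] at h7
      have := Nat.le_of_dvd hdpos h7
      omega
    have himage : (fun i : ZMod (2 * n) => i * r) '' IS = IT := by
      have h8 : σ '' S = QuaternionGroup.a '' ((fun i : ZMod (2 * n) => i * r) '' IS) := by
        rw [hS, Set.image_image, Set.image_image]
        exact Set.image_congr' (fun i => hσa i)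
      rw [h8, hT] at hσ
      exact Set.image_injective.mpr ainj hσ
    have hmemT : ∀ z : ZMod (2 * n), z ∈ IS → z * r ∈ IT := by
      intro z hz
      rw [← himage]
      exact Set.mem_image_of_mem _ hz
    have hCmem : ∀ k : ZMod (2 * n), (c + D * k) * r ∈ IT := fun k =>
      hmemT _ (Set.mem_union_left _ ⟨k, rfl⟩)
    have hkey : ∃ κ : ZMod (2 * n), c * r = c + D * κ := by
      have h0 := hCmem 0
      have h1 := hCmem 1
      rw [hIT, Set.mem_union, Set.mem_singleton_iff, hC, Set.mem_range] at h0 h1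
      rcases h0 with ⟨k, hk⟩ | h0
      · exact ⟨k, by linear_combination -hk⟩
      · rcases h1 with ⟨k, hk⟩ | h1
        · exact ⟨k - r, by linear_combination -hk⟩
        · exfalso
          apply hDr
          linear_combination h1 - h0
    obtain ⟨κ, hκ⟩ := hkey
    have hDrD : D * r = D := by
      linear_combination ((p : ℕ) : ZMod (2 * n)) * hκ - r * hpc + hpc + κ * hpD
    have hDin : D * r ∈ IT := hmemT D (Set.mem_union_right _ rfl)
    rw [hDrD, hIT, Set.mem_union, Set.mem_singleton_iff, hC, Set.mem_range] at hDin
    rcases hDin with ⟨k, hk⟩ | hk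
    · exact hDne (by linear_combination ((p : ℕ) : ZMod (2 * n)) * hk - hpc - k * hpD + hpD)
    · exact hDne (by linear_combination -hk)


end Phi


/-- Corollary 1.2: if the generalized quaternion group `Q_{4n}` (`n ≥ 3`) is a DCI-group,
i.e. has the `m`-DCI property for all `1 ≤ m ≤ |Q_{4n}| = 4n`, then `n` is odd and squarefree. -/
theorem quaternion_DCI_group_necessary (n : ℕ) (hn : 3 ≤ n)
    (hDCI : ∀ m : ℕ, 1 ≤ m → m ≤ Nat.card (QuaternionGroup n) →
      HasDCIProperty (QuaternionGroup n) m) :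
    Odd n ∧ Squarefree n := by
  have hodd : Odd n := by
    by_contra h
    rw [Nat.not_odd_iff_even] at h
    obtain ⟨k, hk⟩ := h
    exact quaternion_even_case n hn ⟨k, by omega⟩ hDCI
  refine ⟨hodd, ?_⟩
  rw [Nat.squarefree_iff_prime_squarefree]
  intro q hq hqq
  have hq' : q.Prime := hq
  by_cases hq2 : q = 2
  · subst hq2
    obtain ⟨k, hk⟩ := hqq
    obtain ⟨j, hj⟩ := hodd
    omega
  · have hq3 : 3 ≤ q := by have := hq'.two_le; omega
    exact quaternion_odd_sq_case n q hn hq' hq3 hqq hDCI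
end

section
/- Let n ≥ 3 be an integer and let G be the generalized quaternion group Q_{4n} of order 4n. If G has the m-DCI property for some integer m with 1 ≤ m ≤ 2n−1, then n is odd. -/
namespace QDCIAux

open QuaternionGroup Set

lemma cayleyArc_iff {G : Type*} [Group G] (S : Set G) (u v : G) :
    CayleyArc S u v ↔ v * u⁻¹ ∈ S := by
  constructor
  · rintro ⟨s, hs, rfl⟩; simpa using hs
  · intro h; exact ⟨v * u⁻¹, h, by group⟩

variable {n : ℕ}

lemma a_inj : Function.Injective (a : ZMod (2*n) → QuaternionGroup n) := by
  intro i j h; injection h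

lemma xa_inj : Function.Injective (xa : ZMod (2*n) → QuaternionGroup n) := by
  intro i j h; injection h

lemma inv_a (i : ZMod (2*n)) : (a i : QuaternionGroup n)⁻¹ = a (-i) := rfl

lemma inv_xa (i : ZMod (2*n)) : (xa i : QuaternionGroup n)⁻¹ = xa ((n : ZMod (2*n)) + i) := rfl

/-- parity ring hom -/
def par : ZMod (2*n) →+* ZMod 2 := ZMod.castHom ⟨n, rfl⟩ (ZMod 2)

lemma par_natCast (k : ℕ) : par ((k : ℕ) : ZMod (2*n)) = (k : ZMod 2) := by
  simp [par]

lemma par_n (hne : Even n) : par ((n : ℕ) : ZMod (2*n)) = 0 := by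
  rw [par_natCast]
  rw [ZMod.natCast_eq_zero_iff]
  exact hne.two_dvd

lemma zmod2_cases (x : ZMod 2) : x = 0 ∨ x = 1 := by revert x; decide

end QDCIAux

namespace QDCIAux

open QuaternionGroup Set

variable {n : ℕ}

lemma a_pow (j : ZMod (2*n)) (m : ℕ) : (a j : QuaternionGroup n) ^ m = a (j * (m : ZMod (2*n))) := by
  induction m with
  | zero => simp
  | succ m ih =>
    rw [pow_succ, ih, a_mul_a]
    congr 1
    push_cast
    ring

/-- Any automorphism maps `a`-type elements to `a`-type elements (n ≥ 3). -/
lemma auto_a_range (hn : 3 ≤ n) (σ : QuaternionGroup n ≃* QuaternionGroup n)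
    (i : ZMod (2*n)) : ∃ j, σ (a i) = a j := by
  haveI : NeZero n := ⟨by omega⟩
  have h1 : orderOf (σ (a 1)) = 2 * n := by
    have h := orderOf_injective (σ : QuaternionGroup n →* QuaternionGroup n) σ.injective (a 1)
    simp only [MonoidHom.coe_coe] at h
    rw [h, orderOf_a_one]
  obtain ⟨k, hk⟩ : ∃ k, σ (a 1) = a k := by
    rcases h : σ (a 1) with k | k
    · exact ⟨k, rfl⟩
    · exfalso
      rw [h, orderOf_xa] at h1
      omega
  have hai : (a i : QuaternionGroup n) = (a 1) ^ i.val := by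
    rw [a_one_pow, ZMod.natCast_zmod_val]
  refine ⟨k * (i.val : ZMod (2*n)), ?_⟩
  rw [hai, map_pow, hk, a_pow]

lemma no_auto (hn : 3 ≤ n) (S T : Set (QuaternionGroup n))
    (hS : ∀ g ∈ S, ∃ i, g = a i) (w : ZMod (2*n)) (hw : xa w ∈ T) :
    ∀ σ : QuaternionGroup n ≃* QuaternionGroup n, ⇑σ '' S ≠ T := by
  intro σ him
  rw [← him] at hw
  obtain ⟨g, hgS, hg⟩ := hw
  obtain ⟨i, rfl⟩ := hS g hgS
  obtain ⟨j, hj⟩ := auto_a_range hn σ i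
  rw [hj] at hg
  exact absurd hg (by simp)

end QDCIAux

namespace QDCIAux

open QuaternionGroup Set

variable {n : ℕ}

section Parity

variable (K W D : Set (ZMod (2*n)))

/-- the source connection set -/
def Spar : Set (QuaternionGroup n) := a '' (K ∪ W ∪ D)

/-- the target connection set -/
def Tpar : Set (QuaternionGroup n) := a '' (K ∪ D) ∪ xa '' W

/-- the vertex bijection -/
def ee : QuaternionGroup n → QuaternionGroup n
  | a i => if par i = 0 then a i else xa i
  | xa i => if par i = 0 then xa i else a i

lemma ee_invol : Function.Involutive (ee (n := n)) := by
  rintro (i | i) <;> by_cases h : par i = 0 <;> simp [ee, h]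

lemma memS_a (i : ZMod (2*n)) : a i ∈ Spar K W D ↔ i ∈ K ∪ W ∪ D := by
  constructor
  · rintro ⟨j, hj, hji⟩; injection hji with h; exact h ▸ hj
  · intro h; exact ⟨i, h, rfl⟩

lemma memS_xa (i : ZMod (2*n)) : xa i ∉ Spar K W D := by
  rintro ⟨j, hj, hji⟩; exact absurd hji (by simp)

lemma memT_a (i : ZMod (2*n)) : a i ∈ Tpar K W D ↔ i ∈ K ∪ D := by
  constructor
  · rintro (⟨j, hj, hji⟩ | ⟨j, hj, hji⟩)
    · injection hji with h; exact h ▸ hj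
    · exact absurd hji (by simp)
  · intro h; exact Or.inl ⟨i, h, rfl⟩

lemma memT_xa (i : ZMod (2*n)) : xa i ∈ Tpar K W D ↔ i ∈ W := by
  constructor
  · rintro (⟨j, hj, hji⟩ | ⟨j, hj, hji⟩)
    · exact absurd hji (by simp)
    · injection hji with h; exact h ▸ hj
  · intro h; exact Or.inr ⟨i, h, rfl⟩

variable {K W D}
variable (hKe : ∀ i ∈ K, par i = 0) (hWo : ∀ i ∈ W, par i = 1)
  (hDe : ∀ i ∈ D, par i = 0)
  (hKs : ∀ i ∈ K, -i ∈ K) (hWs : ∀ i ∈ W, -i ∈ W) (hDs : ∀ i ∈ D, -i ∈ D)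
  (hWn : ∀ i ∈ W, i + (n : ZMod (2*n)) ∈ W)

include hWs in
lemma W_neg (x : ZMod (2*n)) : -x ∈ W ↔ x ∈ W :=
  ⟨fun h => by simpa using hWs _ h, hWs x⟩

include hWn in
lemma W_addn (x : ZMod (2*n)) : x + (n : ZMod (2*n)) ∈ W ↔ x ∈ W := by
  have h2n : ((n : ZMod (2*n)) + n) = 0 := by
    rw [← Nat.cast_add, ← two_mul, ZMod.natCast_self]
  refine ⟨fun h => ?_, hWn x⟩
  have := hWn _ h
  rwa [add_assoc, h2n, add_zero] at this

include hKs hDs in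
lemma KD_neg (x : ZMod (2*n)) : -x ∈ K ∪ D ↔ x ∈ K ∪ D := by
  constructor
  · rintro (h | h)
    · exact Or.inl (by simpa using hKs _ h)
    · exact Or.inr (by simpa using hDs _ h)
  · rintro (h | h)
    · exact Or.inl (hKs _ h)
    · exact Or.inr (hDs _ h)

include hWo in
lemma P_even {x : ZMod (2*n)} (hx : par x = 0) : x ∈ K ∪ W ∪ D ↔ x ∈ K ∪ D := by
  constructor
  · rintro ((h | h) | h)
    · exact Or.inl h
    · rw [hWo _ h] at hx; exact absurd hx (by decide)
    · exact Or.inr h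
  · rintro (h | h)
    · exact Or.inl (Or.inl h)
    · exact Or.inr h

include hKe hDe in
lemma P_odd {x : ZMod (2*n)} (hx : par x = 1) : x ∈ K ∪ W ∪ D ↔ x ∈ W := by
  constructor
  · rintro ((h | h) | h)
    · rw [hKe _ h] at hx; exact absurd hx (by decide)
    · exact h
    · rw [hDe _ h] at hx; exact absurd hx (by decide)
  · intro h; exact Or.inl (Or.inr h)

include hWo in
lemma notW {x : ZMod (2*n)} (hx : par x = 0) : x ∉ W := fun h => by
  rw [hWo _ h] at hx; exact absurd hx (by decide)

include hKe hDe in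
lemma notKD {x : ZMod (2*n)} (hx : par x = 1) : x ∉ K ∪ D := by
  rintro (h | h)
  · rw [hKe _ h] at hx; exact absurd hx (by decide)
  · rw [hDe _ h] at hx; exact absurd hx (by decide)

end Parity

end QDCIAux

namespace QDCIAux

open QuaternionGroup Set

variable {n : ℕ}

section Main

variable {K W D : Set (ZMod (2*n))}
variable (hne : Even n)
  (hKe : ∀ i ∈ K, par i = 0) (hWo : ∀ i ∈ W, par i = 1)
  (hDe : ∀ i ∈ D, par i = 0)
  (hKs : ∀ i ∈ K, -i ∈ K) (hWs : ∀ i ∈ W, -i ∈ W) (hDs : ∀ i ∈ D, -i ∈ D)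
  (hWn : ∀ i ∈ W, i + (n : ZMod (2*n)) ∈ W)

lemma ee_a_even {i : ZMod (2*n)} (h : par i = 0) : ee (a i) = (a i : QuaternionGroup n) := by
  show (if par i = 0 then (a i : QuaternionGroup n) else xa i) = a i
  rw [if_pos h]

lemma ee_a_odd {i : ZMod (2*n)} (h : par i = 1) : ee (a i) = (xa i : QuaternionGroup n) := by
  show (if par i = 0 then (a i : QuaternionGroup n) else xa i) = xa i
  rw [h, if_neg (by decide)]

lemma ee_xa_even {i : ZMod (2*n)} (h : par i = 0) : ee (xa i) = (xa i : QuaternionGroup n) := by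
  show (if par i = 0 then (xa i : QuaternionGroup n) else a i) = xa i
  rw [if_pos h]

lemma ee_xa_odd {i : ZMod (2*n)} (h : par i = 1) : ee (xa i) = (a i : QuaternionGroup n) := by
  show (if par i = 0 then (xa i : QuaternionGroup n) else a i) = a i
  rw [h, if_neg (by decide)]

include hne hKe hWo hDe hKs hWs hDs hWn in
lemma par_main (u v : QuaternionGroup n) :
    v * u⁻¹ ∈ Spar K W D ↔ ee v * (ee u)⁻¹ ∈ Tpar K W D := by
  have h2n : ((n : ZMod (2*n)) + n) = 0 := by
    rw [← Nat.cast_add, ← two_mul, ZMod.natCast_self]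
  rcases u with p | p <;> rcases v with q | q <;>
    rcases zmod2_cases (par p) with hp | hp <;> rcases zmod2_cases (par q) with hq | hq
  -- u = a p, v = a q
  · rw [ee_a_even hp, ee_a_even hq]
    simp only [inv_a, a_mul_a, memS_a, memT_a]
    have hx : par (q + -p) = 0 := by simp only [map_add, map_neg, hp, hq]; decide
    exact P_even hWo hx
  · rw [ee_a_even hp, ee_a_odd hq]
    simp only [inv_a, a_mul_a, xa_mul_a, memS_a, memT_xa]
    have hx : par (q + -p) = 1 := by simp only [map_add, map_neg, hp, hq]; decide
    exact P_odd hKe hDe hx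
  · rw [ee_a_odd hp, ee_a_even hq]
    simp only [inv_a, inv_xa, a_mul_a, a_mul_xa, memS_a, memT_xa]
    have hx : par (q + -p) = 1 := by simp only [map_add, map_neg, hp, hq]; decide
    have e1 : (n : ZMod (2*n)) + p - q = -(q + -p) + n := by ring
    rw [e1, W_addn hWn, W_neg hWs]
    exact P_odd hKe hDe hx
  · rw [ee_a_odd hp, ee_a_odd hq]
    simp only [inv_a, inv_xa, a_mul_a, xa_mul_xa, memS_a, memT_a]
    have hx : par (q + -p) = 0 := by simp only [map_add, map_neg, hp, hq]; decide
    have e1 : (n : ZMod (2*n)) + ((n : ZMod (2*n)) + p) - q = -(q + -p) := by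
      linear_combination h2n
    rw [e1, KD_neg hKs hDs]
    exact P_even hWo hx
  -- u = a p, v = xa q
  · rw [ee_a_even hp, ee_xa_even hq]
    simp only [inv_a, xa_mul_a, memS_xa, memT_xa, false_iff]
    exact notW hWo (by simp only [map_add, map_neg, hp, hq]; decide)
  · rw [ee_a_even hp, ee_xa_odd hq]
    simp only [inv_a, xa_mul_a, a_mul_a, memS_xa, memT_a, false_iff]
    exact notKD hKe hDe (by simp only [map_add, map_neg, hp, hq]; decide)
  · rw [ee_a_odd hp, ee_xa_even hq]
    simp only [inv_a, inv_xa, xa_mul_a, xa_mul_xa, memS_xa, memT_a, false_iff]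
    exact notKD hKe hDe
      (by simp only [map_add, map_sub, map_neg, par_n hne, hp, hq]; decide)
  · rw [ee_a_odd hp, ee_xa_odd hq]
    simp only [inv_a, inv_xa, xa_mul_a, a_mul_xa, memS_xa, memT_xa, false_iff]
    exact notW hWo
      (by simp only [map_add, map_sub, map_neg, par_n hne, hp, hq]; decide)
  -- u = xa p, v = a q
  · rw [ee_xa_even hp, ee_a_even hq]
    simp only [inv_xa, a_mul_xa, memS_xa, memT_xa, false_iff]
    exact notW hWo
      (by simp only [map_add, map_sub, map_neg, par_n hne, hp, hq]; decide)
  · rw [ee_xa_even hp, ee_a_odd hq]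
    simp only [inv_xa, a_mul_xa, xa_mul_xa, memS_xa, memT_a, false_iff]
    exact notKD hKe hDe
      (by simp only [map_add, map_sub, map_neg, par_n hne, hp, hq]; decide)
  · rw [ee_xa_odd hp, ee_a_even hq]
    simp only [inv_xa, inv_a, a_mul_xa, a_mul_a, memS_xa, memT_a, false_iff]
    exact notKD hKe hDe (by simp only [map_add, map_neg, hp, hq]; decide)
  · rw [ee_xa_odd hp, ee_a_odd hq]
    simp only [inv_xa, inv_a, a_mul_xa, xa_mul_a, memS_xa, memT_xa, false_iff]
    exact notW hWo (by simp only [map_add, map_neg, hp, hq]; decide)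
  -- u = xa p, v = xa q
  · rw [ee_xa_even hp, ee_xa_even hq]
    simp only [inv_xa, xa_mul_xa, memS_a, memT_a]
    have hx : par ((n : ZMod (2*n)) + ((n : ZMod (2*n)) + p) - q) = 0 := by
      simp only [map_add, map_sub, par_n hne, hp, hq]; decide
    exact P_even hWo hx
  · rw [ee_xa_even hp, ee_xa_odd hq]
    simp only [inv_xa, xa_mul_xa, a_mul_xa, memS_a, memT_xa]
    have hx : par ((n : ZMod (2*n)) + ((n : ZMod (2*n)) + p) - q) = 1 := by
      simp only [map_add, map_sub, par_n hne, hp, hq]; decide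
    rw [P_odd hKe hDe hx]
    have e1 : (n : ZMod (2*n)) + ((n : ZMod (2*n)) + p) - q
        = ((n : ZMod (2*n)) + p - q) + n := by ring
    rw [e1, W_addn hWn]
  · rw [ee_xa_odd hp, ee_xa_even hq]
    simp only [inv_xa, inv_a, xa_mul_xa, xa_mul_a, memS_a, memT_xa]
    have hx : par ((n : ZMod (2*n)) + ((n : ZMod (2*n)) + p) - q) = 1 := by
      simp only [map_add, map_sub, par_n hne, hp, hq]; decide
    rw [P_odd hKe hDe hx]
    have e1 : (n : ZMod (2*n)) + ((n : ZMod (2*n)) + p) - q = -(q + -p) := by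
      linear_combination h2n
    rw [e1, W_neg hWs]
  · rw [ee_xa_odd hp, ee_xa_odd hq]
    simp only [inv_xa, inv_a, xa_mul_xa, a_mul_a, memS_a, memT_a]
    have hx : par ((n : ZMod (2*n)) + ((n : ZMod (2*n)) + p) - q) = 0 := by
      simp only [map_add, map_sub, par_n hne, hp, hq]; decide
    rw [P_even hWo hx]
    have e1 : (n : ZMod (2*n)) + ((n : ZMod (2*n)) + p) - q = -(q + -p) := by
      linear_combination h2n
    rw [e1, KD_neg hKs hDs]

include hne hKe hWo hDe hKs hWs hDs hWn in
lemma cayleyIso_par : CayleyIso (Spar K W D) (Tpar K W D) := by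
  refine ⟨(ee_invol (n := n)).toPerm _, fun u v => ?_⟩
  rw [cayleyArc_iff, cayleyArc_iff]
  simpa using par_main hne hKe hWo hDe hKs hWs hDs hWn u v

end Main

end QDCIAux

namespace QDCIAux

open QuaternionGroup Set

variable {n : ℕ}

section Concrete

/-- symmetric set of even residues of size `2*β` -/
def KS (β : ℕ) : Set (ZMod (2*n)) :=
  (fun t : ℕ => ((2*t+2 : ℕ) : ZMod (2*n))) '' ↑(Finset.range β) ∪
    (fun t : ℕ => -((2*t+2 : ℕ) : ZMod (2*n))) '' ↑(Finset.range β)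

lemma mem_KS {β : ℕ} {x : ZMod (2*n)} :
    x ∈ KS β ↔ ∃ t < β, x = ((2*t+2 : ℕ) : ZMod (2*n)) ∨ x = -((2*t+2 : ℕ) : ZMod (2*n)) := by
  constructor
  · rintro (⟨t, ht, rfl⟩ | ⟨t, ht, rfl⟩)
    · exact ⟨t, by simpa using ht, Or.inl rfl⟩
    · exact ⟨t, by simpa using ht, Or.inr rfl⟩
  · rintro ⟨t, ht, (rfl | rfl)⟩
    · exact Or.inl ⟨t, by simpa using ht, rfl⟩
    · exact Or.inr ⟨t, by simpa using ht, rfl⟩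

lemma KS_even {β : ℕ} : ∀ i ∈ (KS β : Set (ZMod (2*n))), par i = 0 := by
  intro i hi
  rw [mem_KS] at hi
  obtain ⟨t, _, (rfl | rfl)⟩ := hi
  · rw [par_natCast]
    rw [ZMod.natCast_eq_zero_iff]
    exact ⟨t+1, by ring⟩
  · rw [map_neg, par_natCast]
    rw [show ((2*t+2 : ℕ) : ZMod 2) = 0 from
      (ZMod.natCast_eq_zero_iff _ _).mpr ⟨t+1, by ring⟩]
    ring

lemma KS_symm {β : ℕ} : ∀ i ∈ (KS β : Set (ZMod (2*n))), -i ∈ KS β := by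
  intro i hi
  rw [mem_KS] at hi ⊢
  obtain ⟨t, ht, (rfl | rfl)⟩ := hi
  · exact ⟨t, ht, Or.inr rfl⟩
  · exact ⟨t, ht, Or.inl (neg_neg _)⟩

lemma zero_not_mem_KS {β : ℕ} (hβ : 2*β + 2 ≤ n) (hn : 1 ≤ n) :
    (0 : ZMod (2*n)) ∉ KS β := by
  haveI : NeZero (2*n) := ⟨by omega⟩
  rw [mem_KS]
  rintro ⟨t, ht, (h | h)⟩
  · rw [eq_comm, ZMod.natCast_eq_zero_iff] at h
    have := Nat.le_of_dvd (by omega) h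
    omega
  · rw [eq_comm, neg_eq_zero, ZMod.natCast_eq_zero_iff] at h
    have := Nat.le_of_dvd (by omega) h
    omega

lemma n_not_mem_KS {β : ℕ} (hβ : 2*β + 2 ≤ n) (hn : 1 ≤ n) :
    ((n : ℕ) : ZMod (2*n)) ∉ KS β := by
  haveI : NeZero (2*n) := ⟨by omega⟩
  rw [mem_KS]
  rintro ⟨t, ht, (h | h)⟩
  · rw [ZMod.natCast_eq_natCast_iff'] at h
    rw [Nat.mod_eq_of_lt (by omega), Nat.mod_eq_of_lt (by omega)] at h
    omega
  · rw [eq_comm, neg_eq_iff_add_eq_zero, ← Nat.cast_add,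
      ZMod.natCast_eq_zero_iff] at h
    have := Nat.le_of_dvd (by omega) h
    omega

lemma ncard_KS {β : ℕ} (hβ : 2*β + 2 ≤ n) : (KS β : Set (ZMod (2*n))).ncard = 2*β := by
  haveI : NeZero (2*n) := ⟨by omega⟩
  have hinj1 : Set.InjOn (fun t : ℕ => ((2*t+2 : ℕ) : ZMod (2*n))) ↑(Finset.range β) := by
    intro s hs t ht h
    simp only [Finset.coe_range, mem_Iio] at hs ht
    simp only at h
    rw [ZMod.natCast_eq_natCast_iff', Nat.mod_eq_of_lt (by omega),
      Nat.mod_eq_of_lt (by omega)] at h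
    omega
  have hinj2 : Set.InjOn (fun t : ℕ => -((2*t+2 : ℕ) : ZMod (2*n))) ↑(Finset.range β) := by
    intro s hs t ht h
    simp only [Finset.coe_range, mem_Iio] at hs ht
    simp only [neg_inj] at h
    rw [ZMod.natCast_eq_natCast_iff', Nat.mod_eq_of_lt (by omega),
      Nat.mod_eq_of_lt (by omega)] at h
    omega
  have hdisj : Disjoint ((fun t : ℕ => ((2*t+2 : ℕ) : ZMod (2*n))) '' ↑(Finset.range β))
      ((fun t : ℕ => -((2*t+2 : ℕ) : ZMod (2*n))) '' ↑(Finset.range β)) := by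
    rw [Set.disjoint_left]
    rintro x ⟨s, hs, rfl⟩ ⟨t, ht, hx⟩
    simp only [Finset.coe_range, mem_Iio] at hs ht
    simp only at hx
    have hx' : (((2*s+2) + (2*t+2) : ℕ) : ZMod (2*n)) = 0 := by
      push_cast at hx ⊢
      linear_combination -hx
    rw [ZMod.natCast_eq_zero_iff] at hx'
    have := Nat.le_of_dvd (by omega) hx'
    omega
  rw [KS, Set.ncard_union_eq hdisj (Set.toFinite _) (Set.toFinite _),
    Set.ncard_image_of_injOn hinj1, Set.ncard_image_of_injOn hinj2,
    Set.ncard_coe_finset, Finset.card_range]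
  omega

end Concrete

end QDCIAux

namespace QDCIAux

open QuaternionGroup Set

variable {n : ℕ}

lemma nn_zero : ((n : ℕ) : ZMod (2*n)) + ((n : ℕ) : ZMod (2*n)) = 0 := by
  rw [← Nat.cast_add, ← two_mul, ZMod.natCast_self]

section Wsets

/-- small symmetric odd set, size 4 -/
def W4 : Set (ZMod (2*n)) :=
  {((1:ℕ) : ZMod (2*n)), -((1:ℕ) : ZMod (2*n)),
    (((n+1 :ℕ)) : ZMod (2*n)), -(((n+1:ℕ)) : ZMod (2*n))}

/-- all odd residues, size n -/
def Wall : Set (ZMod (2*n)) := {x | par x = 1}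

lemma odd_cast_par {k : ℕ} (hk : k % 2 = 1) : par ((k : ℕ) : ZMod (2*n)) = 1 := by
  rw [par_natCast, ← ZMod.natCast_mod, hk, Nat.cast_one]

lemma W4_odd (hne : Even n) : ∀ i ∈ (W4 : Set (ZMod (2*n))), par i = 1 := by
  have h1 : par (((1:ℕ)) : ZMod (2*n)) = 1 := odd_cast_par (by omega)
  have h2 : par (((n+1:ℕ)) : ZMod (2*n)) = 1 :=
    odd_cast_par (by have := Nat.even_iff.mp hne; omega)
  rintro i (rfl | rfl | rfl | rfl)
  · exact h1
  · rw [map_neg, h1]; decide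
  · exact h2
  · rw [map_neg, h2]; decide

lemma W4_symm : ∀ i ∈ (W4 : Set (ZMod (2*n))), -i ∈ W4 := by
  rintro i (rfl | rfl | rfl | rfl)
  · exact Or.inr (Or.inl rfl)
  · exact Or.inl (neg_neg _)
  · exact Or.inr (Or.inr (Or.inr rfl))
  · exact Or.inr (Or.inr (Or.inl (neg_neg _)))

lemma W4_addn : ∀ i ∈ (W4 : Set (ZMod (2*n))), i + ((n:ℕ) : ZMod (2*n)) ∈ W4 := by
  have h2n : ((n : ℕ) : ZMod (2*n)) + ((n : ℕ) : ZMod (2*n)) = 0 := nn_zero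
  rintro i (rfl | rfl | rfl | rfl)
  · refine Or.inr (Or.inr (Or.inl ?_))
    push_cast
    ring
  · refine Or.inr (Or.inr (Or.inr ?_))
    rw [Set.mem_singleton_iff]
    push_cast at h2n ⊢
    linear_combination h2n
  · refine Or.inl ?_
    push_cast at h2n ⊢
    linear_combination h2n
  · refine Or.inr (Or.inl ?_)
    push_cast
    ring

lemma one_mem_W4 : ((1:ℕ) : ZMod (2*n)) ∈ W4 := Or.inl rfl

lemma ncard_W4 (hn : 3 ≤ n) : (W4 : Set (ZMod (2*n))).ncard = 4 := by
  haveI : NeZero (2*n) := ⟨by omega⟩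
  have cast_ne : ∀ x y : ℕ, 0 < x + y → x + y < 2*n →
      ¬(((x:ℕ) : ZMod (2*n)) = -((y:ℕ) : ZMod (2*n))) := by
    intro x y h1 h2 h
    have hx' : (((x + y) : ℕ) : ZMod (2*n)) = 0 := by
      push_cast at h ⊢
      linear_combination h
    rw [ZMod.natCast_eq_zero_iff] at hx'
    have := Nat.le_of_dvd (by omega) hx'
    omega
  have cast_ne' : ∀ x y : ℕ, x < 2*n → y < 2*n → x ≠ y →
      ¬(((x:ℕ) : ZMod (2*n)) = ((y:ℕ) : ZMod (2*n))) := by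
    intro x y hx hy hxy h
    rw [ZMod.natCast_eq_natCast_iff', Nat.mod_eq_of_lt hx, Nat.mod_eq_of_lt hy] at h
    exact hxy h
  have d12 : ¬(((1:ℕ) : ZMod (2*n)) = -((1:ℕ) : ZMod (2*n))) := cast_ne 1 1 (by omega) (by omega)
  have d13 : ¬(((1:ℕ) : ZMod (2*n)) = ((n+1:ℕ) : ZMod (2*n))) :=
    cast_ne' 1 (n+1) (by omega) (by omega) (by omega)
  have d14 : ¬(((1:ℕ) : ZMod (2*n)) = -((n+1:ℕ) : ZMod (2*n))) :=
    cast_ne 1 (n+1) (by omega) (by omega)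
  have d23 : ¬(-((1:ℕ) : ZMod (2*n)) = ((n+1:ℕ) : ZMod (2*n))) := by
    intro h; exact cast_ne (n+1) 1 (by omega) (by omega) h.symm
  have d24 : ¬(-((1:ℕ) : ZMod (2*n)) = -((n+1:ℕ) : ZMod (2*n))) := by
    rw [neg_inj]
    exact cast_ne' 1 (n+1) (by omega) (by omega) (by omega)
  have d34 : ¬(((n+1:ℕ) : ZMod (2*n)) = -((n+1:ℕ) : ZMod (2*n))) := by
    intro h
    have hx' : ((((n+1) + (n+1)) : ℕ) : ZMod (2*n)) = 0 := by
      push_cast at h ⊢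
      linear_combination h
    rw [ZMod.natCast_eq_zero_iff] at hx'
    obtain ⟨k, hk⟩ := hx'
    rcases k with _ | _ | k
    · omega
    · omega
    · have h4 : 2*n*(k+1+1) ≥ 2*n*2 := Nat.mul_le_mul_left (2*n) (by omega)
      omega
  rw [W4]
  rw [Set.ncard_insert_of_notMem (by
      rintro (h | h | h)
      exacts [d12 h, d13 h, d14 h]) (Set.toFinite _),
    Set.ncard_insert_of_notMem (by
      rintro (h | h)
      exacts [d23 h, d24 h]) (Set.toFinite _),
    Set.ncard_insert_of_notMem (by
      rintro h
      exact d34 h) (Set.toFinite _),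
    Set.ncard_singleton]

lemma Wall_odd : ∀ i ∈ (Wall : Set (ZMod (2*n))), par i = 1 := fun _ h => h

lemma Wall_symm : ∀ i ∈ (Wall : Set (ZMod (2*n))), -i ∈ Wall := by
  intro i hi
  have : par i = 1 := hi
  show par (-i) = 1
  rw [map_neg, this]
  decide

lemma Wall_addn (hne : Even n) :
    ∀ i ∈ (Wall : Set (ZMod (2*n))), i + ((n:ℕ) : ZMod (2*n)) ∈ Wall := by
  intro i hi
  have h : par i = 1 := hi
  show par (i + _) = 1
  rw [map_add, h, par_n hne, add_zero]

lemma one_mem_Wall : ((1:ℕ) : ZMod (2*n)) ∈ Wall := odd_cast_par (by omega)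

lemma ncard_Wall (hn : 1 ≤ n) : (Wall : Set (ZMod (2*n))).ncard = n := by
  haveI : NeZero (2*n) := ⟨by omega⟩
  have huniv : (Set.univ : Set (ZMod (2*n))).ncard = 2*n := by
    rw [Set.ncard_univ, Nat.card_zmod]
  have hsplit : (Set.univ : Set (ZMod (2*n))) = {x | par x = 0} ∪ Wall := by
    ext x
    simp only [Set.mem_univ, Set.mem_union, true_iff]
    exact zmod2_cases (par x)
  have hdisj : Disjoint {x : ZMod (2*n) | par x = 0} Wall := by
    rw [Set.disjoint_left]
    intro x hx hx'
    have h0 : par x = 0 := hx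
    have h1 : par x = 1 := hx'
    rw [h0] at h1
    exact absurd h1 (by decide)
  have himg : Wall = (fun x : ZMod (2*n) => x + ((1:ℕ) : ZMod (2*n))) '' {x | par x = 0} := by
    ext x
    constructor
    · intro hx
      refine ⟨x - ((1:ℕ) : ZMod (2*n)), ?_, by ring⟩
      show par _ = 0
      rw [map_sub, (hx : par x = 1), odd_cast_par (by omega)]
      decide
    · rintro ⟨y, hy, rfl⟩
      show par _ = 1
      rw [map_add, (hy : par y = 0), odd_cast_par (n := n) (k := 1) (by omega)]
      decide
  have hcardeq : (Wall : Set (ZMod (2*n))).ncard = {x : ZMod (2*n) | par x = 0}.ncard := by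
    rw [himg, Set.ncard_image_of_injective _ (add_left_injective _)]
  rw [hsplit, Set.ncard_union_eq hdisj (Set.toFinite _) (Set.toFinite _)] at huniv
  omega

end Wsets

end QDCIAux

namespace QDCIAux

open QuaternionGroup Set

variable {n : ℕ}

lemma disj_par {A B : Set (ZMod (2*n))} (hA : ∀ i ∈ A, par i = 0)
    (hB : ∀ i ∈ B, par i = 1) : Disjoint A B := by
  rw [Set.disjoint_left]
  intro x hx hx'
  have h0 := hA x hx
  have h1 := hB x hx'
  rw [h0] at h1
  exact absurd h1 (by decide)

lemma contra_main (hn : 3 ≤ n) (hne : Even n)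
    {K W D : Set (ZMod (2*n))}
    (hKe : ∀ i ∈ K, par i = 0) (hWo : ∀ i ∈ W, par i = 1)
    (hDe : ∀ i ∈ D, par i = 0)
    (hKs : ∀ i ∈ K, -i ∈ K) (hWs : ∀ i ∈ W, -i ∈ W) (hDs : ∀ i ∈ D, -i ∈ D)
    (hWn : ∀ i ∈ W, i + ((n:ℕ) : ZMod (2*n)) ∈ W)
    (h0K : (0 : ZMod (2*n)) ∉ K) (h0D : (0 : ZMod (2*n)) ∉ D)
    (h1W : ((1:ℕ) : ZMod (2*n)) ∈ W)
    (hDCI : HasDCIProperty (QuaternionGroup n) ((K ∪ W ∪ D).ncard)) : False := by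
  have h0W : (0 : ZMod (2*n)) ∉ W := by
    intro h
    have := hWo _ h
    rw [map_zero] at this
    exact absurd this (by decide)
  have h1S : (1 : QuaternionGroup n) ∉ Spar K W D := by
    rw [one_def, memS_a]
    rintro ((h | h) | h)
    exacts [h0K h, h0W h, h0D h]
  have h1T : (1 : QuaternionGroup n) ∉ Tpar K W D := by
    rw [one_def, memT_a]
    rintro (h | h)
    exacts [h0K h, h0D h]
  have hIso := cayleyIso_par hne hKe hWo hDe hKs hWs hDs hWn
  obtain ⟨σ, hσ⟩ := hDCI _ h1S (Set.ncard_image_of_injective _ a_inj) _ h1T hIso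
  refine no_auto hn (Spar K W D) (Tpar K W D) ?_ ((1:ℕ) : ZMod (2*n)) ?_ σ hσ
  · rintro g ⟨i, _, rfl⟩
    exact ⟨i, rfl⟩
  · rw [memT_xa]
    exact h1W

lemma ncard_union3 (hnz : 1 ≤ n) {A B C : Set (ZMod (2*n))} (hAB : Disjoint A B)
    (hAC : Disjoint A C) (hBC : Disjoint B C) :
    (A ∪ B ∪ C).ncard = A.ncard + B.ncard + C.ncard := by
  haveI : NeZero (2*n) := ⟨by omega⟩
  rw [Set.ncard_union_eq (by exact Set.disjoint_union_left.mpr ⟨hAC, hBC⟩)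
    (Set.toFinite _) (Set.toFinite _),
    Set.ncard_union_eq hAB (Set.toFinite _) (Set.toFinite _)]

lemma Dn_props (hne : Even n) (hn : 1 ≤ n) :
    (∀ i ∈ ({((n:ℕ) : ZMod (2*n))} : Set (ZMod (2*n))), par i = 0) ∧
    (∀ i ∈ ({((n:ℕ) : ZMod (2*n))} : Set (ZMod (2*n))), -i ∈ ({((n:ℕ) : ZMod (2*n))} : Set (ZMod (2*n)))) ∧
    ((0 : ZMod (2*n)) ∉ ({((n:ℕ) : ZMod (2*n))} : Set (ZMod (2*n)))) := by
  haveI : NeZero (2*n) := ⟨by omega⟩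
  refine ⟨?_, ?_, ?_⟩
  · rintro i rfl
    exact par_n hne
  · rintro i rfl
    rw [Set.mem_singleton_iff]
    exact neg_eq_of_add_eq_zero_left nn_zero
  · rw [Set.mem_singleton_iff]
    intro h
    rw [eq_comm, ZMod.natCast_eq_zero_iff] at h
    have := Nat.le_of_dvd (by omega) h
    omega

lemma big_case (hn : 3 ≤ n) (hne : Even n) (m : ℕ) (hm4 : 4 ≤ m) (hm2 : m ≤ 2*n - 1)
    (hDCI : HasDCIProperty (QuaternionGroup n) m) : False := by
  have hnn : 4 ≤ n := by
    obtain ⟨k, hk⟩ := hne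
    omega
  have hn2 := Nat.even_iff.mp hne
  obtain ⟨W, hWcard, hWo, hWs, hWn, h1W⟩ :
      ∃ W : Set (ZMod (2*n)), (W.ncard = 4 ∧ m ≤ n + 3 ∨ W.ncard = n ∧ n + 4 ≤ m) ∧
        (∀ i ∈ W, par i = 1) ∧ (∀ i ∈ W, -i ∈ W) ∧
        (∀ i ∈ W, i + ((n:ℕ) : ZMod (2*n)) ∈ W) ∧ ((1:ℕ) : ZMod (2*n)) ∈ W := by
    by_cases hc : m ≤ n + 3
    · exact ⟨W4, Or.inl ⟨ncard_W4 hn, hc⟩, W4_odd hne, W4_symm, W4_addn, one_mem_W4⟩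
    · exact ⟨Wall, Or.inr ⟨ncard_Wall (by omega), by omega⟩, Wall_odd, Wall_symm,
        Wall_addn hne, one_mem_Wall⟩
  set A := W.ncard with hA
  set δ := (m - A) % 2 with hδdef
  set β := (m - A) / 2 with hβdef
  have hδ : δ = 0 ∨ δ = 1 := by omega
  have hβ2 : 2*β + 2 ≤ n := by
    rcases hWcard with ⟨h4, hb⟩ | ⟨hN, hb⟩ <;> omega
  have hsum : m = 2*β + A + δ := by
    rcases hWcard with ⟨h4, hb⟩ | ⟨hN, hb⟩ <;> omega
  obtain ⟨D, hDe, hDs, h0D, hDcard, hDn⟩ :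
      ∃ D : Set (ZMod (2*n)), (∀ i ∈ D, par i = 0) ∧ (∀ i ∈ D, -i ∈ D) ∧
        ((0 : ZMod (2*n)) ∉ D) ∧ D.ncard = δ ∧
        (∀ x ∈ D, x = ((n:ℕ) : ZMod (2*n))) := by
    rcases hδ with h | h
    · exact ⟨∅, by simp, by simp, by simp, by simp [h], by simp⟩
    · obtain ⟨hd1, hd2, hd3⟩ := Dn_props hne (by omega)
      exact ⟨{((n:ℕ) : ZMod (2*n))}, hd1, hd2, hd3, by rw [Set.ncard_singleton, h],
        fun x hx => hx⟩
  have hKcard := ncard_KS (n := n) (β := β) hβ2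
  have hDK : Disjoint (KS β : Set (ZMod (2*n))) D := by
    rw [Set.disjoint_left]
    intro x hx hx'
    rw [hDn x hx'] at hx
    exact n_not_mem_KS hβ2 (by omega) hx
  have hP : ((KS β ∪ W ∪ D : Set (ZMod (2*n)))).ncard = m := by
    rw [ncard_union3 (by omega) (disj_par KS_even hWo) hDK (disj_par hDe hWo).symm,
      hKcard, hDcard, hsum]
  exact contra_main hn hne KS_even hWo hDe KS_symm hWs hDs hWn
    (zero_not_mem_KS hβ2 (by omega)) h0D h1W (by rw [hP]; exact hDCI)

end QDCIAux

namespace QDCIAux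

open QuaternionGroup Set

variable {n : ℕ}

/-- quarter index -/
def pp (j : ZMod (2*n)) : ℕ := j.val / (n/2) % 2

/-- the bijection conjugating left-multiplication by `a (n/2)` to left-multiplication
by `xa 0` -/
def e4 : QuaternionGroup n → QuaternionGroup n
  | a j => if pp j = 0 then a j else xa (j - ((n/2 : ℕ) : ZMod (2*n)))
  | xa j => if pp j = 0 then a (j + ((n/2 : ℕ) : ZMod (2*n))) else xa (j + ((n:ℕ) : ZMod (2*n)))

section E4

variable (hne : Even n) (hn4 : 4 ≤ n)

lemma pp_lt (j : ZMod (2*n)) : pp j < 2 := by unfold pp; omega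

include hne hn4 in
lemma pp_flip (j : ZMod (2*n)) :
    pp (j + ((n/2 : ℕ) : ZMod (2*n))) = (pp j + 1) % 2 := by
  haveI : NeZero (2*n) := ⟨by omega⟩
  obtain ⟨h, hh⟩ : ∃ h, n = 2*h := by
    obtain ⟨k, hk⟩ := hne; exact ⟨k, by omega⟩
  have hdef : n/2 = h := by omega
  rw [pp, pp, hdef]
  have h2 : 2 ≤ h := by omega
  have hval : ((h : ℕ) : ZMod (2*n)).val = h := ZMod.val_cast_of_lt (by omega)
  have hjlt : j.val < 2*n := ZMod.val_lt j
  rw [ZMod.val_add, hval]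
  rcases Nat.lt_or_ge (j.val + h) (2*n) with hlt | hge
  · rw [Nat.mod_eq_of_lt hlt, Nat.add_div_right _ (by omega)]
    omega
  · have hmod : (j.val + h) % (2*n) = j.val + h - 2*n := by
      rw [Nat.mod_eq_sub_mod hge, Nat.mod_eq_of_lt (by omega)]
    rw [hmod]
    have hd1 : (j.val + h - 2*n) / h = 0 := Nat.div_eq_of_lt (by omega)
    have hd2 : j.val / h = 3 :=
      Nat.div_eq_of_lt_le (by omega) (by omega)
    rw [hd1, hd2]

end E4

end QDCIAux

namespace QDCIAux

open QuaternionGroup Set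

variable {n : ℕ}

section E4b

variable (hne : Even n) (hn4 : 4 ≤ n)

include hne in
lemma cast_n_split : ((n:ℕ) : ZMod (2*n)) =
    ((n/2:ℕ) : ZMod (2*n)) + ((n/2:ℕ) : ZMod (2*n)) := by
  rw [← Nat.cast_add]
  obtain ⟨k, hk⟩ := hne
  exact (congrArg (Nat.cast : ℕ → ZMod (2*n)) (show n/2 + n/2 = n by omega)).symm

include hne hn4 in
lemma pp_flip_sub (j : ZMod (2*n)) :
    pp (j - ((n/2:ℕ) : ZMod (2*n))) = (pp j + 1) % 2 := by
  have h1 := pp_flip hne hn4 (j - ((n/2:ℕ) : ZMod (2*n)))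
  rw [sub_add_cancel] at h1
  have h2 := pp_lt (j - ((n/2:ℕ) : ZMod (2*n)))
  have h3 := pp_lt j
  omega

include hne hn4 in
lemma pp_addn (j : ZMod (2*n)) : pp (j + ((n:ℕ) : ZMod (2*n))) = pp j := by
  rw [cast_n_split hne, ← add_assoc, pp_flip hne hn4, pp_flip hne hn4]
  have := pp_lt j
  omega

omit hne hn4 in
lemma pp_one {j : ZMod (2*n)} (h : ¬ pp j = 0) : pp j = 1 := by
  have := pp_lt j
  omega

include hne hn4 in
lemma e4_invol : Function.Involutive (e4 (n := n)) := by
  have hnn : ((n:ℕ) : ZMod (2*n)) + ((n:ℕ) : ZMod (2*n)) = 0 := nn_zero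
  rintro (j | j)
  · by_cases hp : pp j = 0
    · simp [e4, hp]
    · have h1 : pp (j - ((n/2:ℕ) : ZMod (2*n))) = 0 := by
        rw [pp_flip_sub hne hn4, pp_one hp]
      simp [e4, hp, h1, sub_add_cancel]
  · by_cases hp : pp j = 0
    · have h1 : pp (j + ((n/2:ℕ) : ZMod (2*n))) = 1 := by
        rw [pp_flip hne hn4, hp]
      simp [e4, hp, h1, add_sub_cancel_right]
    · have h1 : pp (j + ((n:ℕ) : ZMod (2*n))) = 1 := by
        rw [pp_addn hne hn4, pp_one hp]
      have h2 : j + ((n:ℕ) : ZMod (2*n)) + ((n:ℕ) : ZMod (2*n)) = j := by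
        rw [add_assoc, hnn, add_zero]
      simp [e4, hp, h1, h2]

include hne hn4 in
lemma e4_key (x : QuaternionGroup n) :
    e4 ((a ((n/2:ℕ) : ZMod (2*n))) * x) = xa 0 * e4 x := by
  have hcast := cast_n_split hne
  have hnn : ((n:ℕ) : ZMod (2*n)) + ((n:ℕ) : ZMod (2*n)) = 0 := nn_zero
  rcases x with j | j
  · rw [a_mul_a]
    by_cases hp : pp j = 0
    · have h1 : pp (((n/2:ℕ) : ZMod (2*n)) + j) = 1 := by
        rw [add_comm, pp_flip hne hn4, hp]
      rw [show e4 (a j) = a j from by simp [e4, hp],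
        show e4 (a (((n/2:ℕ) : ZMod (2*n)) + j)) = xa (((n/2:ℕ) : ZMod (2*n)) + j
            - ((n/2:ℕ) : ZMod (2*n))) from by simp [e4, h1]]
      rw [xa_mul_a]
      congr 1
      ring
    · have h1 : pp (((n/2:ℕ) : ZMod (2*n)) + j) = 0 := by
        rw [add_comm, pp_flip hne hn4, pp_one hp]
      rw [show e4 (a j) = xa (j - ((n/2:ℕ) : ZMod (2*n))) from by simp [e4, hp],
        show e4 (a (((n/2:ℕ) : ZMod (2*n)) + j)) = a (((n/2:ℕ) : ZMod (2*n)) + j)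
          from by simp [e4, h1]]
      rw [xa_mul_xa]
      congr 1
      rw [hcast]
      ring
  · rw [a_mul_xa]
    by_cases hp : pp j = 0
    · have h1 : pp (j - ((n/2:ℕ) : ZMod (2*n))) = 1 := by
        rw [pp_flip_sub hne hn4, hp]
      rw [show e4 (xa j) = a (j + ((n/2:ℕ) : ZMod (2*n))) from by simp [e4, hp],
        show e4 (xa (j - ((n/2:ℕ) : ZMod (2*n)))) = xa (j - ((n/2:ℕ) : ZMod (2*n))
            + ((n:ℕ) : ZMod (2*n))) from by simp [e4, h1]]
      rw [xa_mul_a]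
      congr 1
      rw [hcast]
      ring
    · have h1 : pp (j - ((n/2:ℕ) : ZMod (2*n))) = 0 := by
        rw [pp_flip_sub hne hn4, pp_one hp]
      rw [show e4 (xa j) = xa (j + ((n:ℕ) : ZMod (2*n))) from by simp [e4, hp],
        show e4 (xa (j - ((n/2:ℕ) : ZMod (2*n)))) = a (j - ((n/2:ℕ) : ZMod (2*n))
            + ((n/2:ℕ) : ZMod (2*n))) from by simp [e4, h1]]
      rw [xa_mul_xa]
      congr 1
      rw [sub_add_cancel]
      linear_combination -hnn

include hne hn4 in
lemma e4_key_pow (t : ℕ) (x : QuaternionGroup n) :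
    e4 ((a ((n/2:ℕ) : ZMod (2*n)))^t * x) = (xa 0)^t * e4 x := by
  induction t generalizing x with
  | zero => simp
  | succ t ih =>
    rw [pow_succ, pow_succ, mul_assoc, mul_assoc, ← e4_key hne hn4, ← ih]

end E4b

end QDCIAux

namespace QDCIAux

open QuaternionGroup Set

variable {n : ℕ}

section Small

variable (hne : Even n) (hn4 : 4 ≤ n)

include hne hn4 in
lemma small_iso (U : Set ℕ) :
    CayleyIso ((fun t => (a ((n/2:ℕ) : ZMod (2*n)) : QuaternionGroup n) ^ t) '' U)
      ((fun t => (xa 0 : QuaternionGroup n) ^ t) '' U) := by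
  refine ⟨(e4_invol hne hn4).toPerm, fun u v => ?_⟩
  simp only [Function.Involutive.coe_toPerm]
  constructor
  · rintro ⟨s, ⟨t, htU, rfl⟩, rfl⟩
    exact ⟨_, ⟨t, htU, rfl⟩, e4_key_pow hne hn4 t u⟩
  · rintro ⟨s, ⟨t, htU, rfl⟩, hv⟩
    refine ⟨_, ⟨t, htU, rfl⟩, ?_⟩
    have h2 : e4 v = e4 ((a ((n/2:ℕ) : ZMod (2*n)))^t * u) := by
      rw [hv, e4_key_pow hne hn4 t u]
    exact (e4_invol hne hn4).injective h2

include hne hn4 in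
lemma small_case (hn : 3 ≤ n) (m : ℕ) (hm1 : 1 ≤ m) (hm3 : m ≤ 3)
    (hDCI : HasDCIProperty (QuaternionGroup n) m) : False := by
  haveI : NeZero n := ⟨by omega⟩
  haveI : NeZero (2*n) := ⟨by omega⟩
  set U : Set ℕ := ↑(Finset.Icc 1 m) with hU
  have hUmem : ∀ t, t ∈ U ↔ 1 ≤ t ∧ t ≤ m := by
    intro t
    simp [hU, Finset.mem_Icc]
  have hUcard : U.ncard = m := by
    rw [hU, Set.ncard_coe_finset, Nat.card_Icc]
    omega
  have hpow : ∀ t : ℕ, (a ((n/2:ℕ) : ZMod (2*n)) : QuaternionGroup n)^t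
      = a (((n/2 * t : ℕ)) : ZMod (2*n)) := by
    intro t
    rw [a_pow]
    congr 1
    push_cast
    ring
  have hvalt : ∀ t, t ≤ 3 → (((n/2 * t : ℕ)) : ZMod (2*n)).val = n/2 * t := by
    intro t ht
    refine ZMod.val_cast_of_lt ?_
    have := Nat.mul_le_mul_left (n/2) ht
    omega
  have hinj : Set.InjOn (fun t => (a ((n/2:ℕ) : ZMod (2*n)) : QuaternionGroup n)^t) U := by
    intro t1 h1 t2 h2 heq
    rw [hUmem] at h1 h2
    simp only [hpow] at heq
    have hval := congrArg ZMod.val (a_inj heq)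
    rw [hvalt t1 (by omega), hvalt t2 (by omega)] at hval
    exact Nat.eq_of_mul_eq_mul_left (by omega) hval
  set S : Set (QuaternionGroup n) := (fun t => (a ((n/2:ℕ) : ZMod (2*n)) : QuaternionGroup n)^t) '' U with hS
  set T : Set (QuaternionGroup n) := (fun t => (xa 0 : QuaternionGroup n)^t) '' U with hT
  have hScard : S.ncard = m := by
    rw [hS, Set.ncard_image_of_injOn hinj, hUcard]
  have h1S : (1 : QuaternionGroup n) ∉ S := by
    rintro ⟨t, htU, hteq⟩
    rw [hUmem] at htU
    simp only [hpow] at hteq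
    rw [one_def] at hteq
    have hval := congrArg ZMod.val (a_inj hteq)
    rw [hvalt t (by omega), ZMod.val_zero] at hval
    rcases Nat.mul_eq_zero.mp hval with h | h <;> omega
  have h1T : (1 : QuaternionGroup n) ∉ T := by
    rintro ⟨t, htU, hteq⟩
    rw [hUmem] at htU
    have hdvd := orderOf_dvd_of_pow_eq_one hteq
    rw [orderOf_xa] at hdvd
    have := Nat.le_of_dvd (by omega) hdvd
    omega
  obtain ⟨σ, hσ⟩ := hDCI S h1S hScard T h1T (small_iso hne hn4 U)
  refine no_auto hn S T ?_ 0 ?_ σ hσ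
  · rintro g ⟨t, _, rfl⟩
    exact ⟨_, hpow t⟩
  · refine ⟨1, ?_, ?_⟩
    · rw [hUmem]; omega
    · simp

end Small

end QDCIAux

/-- Lemma 3.1: if the generalized quaternion group `Q_{4n}` (`n ≥ 3`) has the `m`-DCI
property for some `1 ≤ m ≤ 2n-1`, then `n` is odd. -/
theorem quaternion_mDCI_n_odd (n : ℕ) (hn : 3 ≤ n) (m : ℕ)
    (hm1 : 1 ≤ m) (hm2 : m ≤ 2 * n - 1)
    (hDCI : HasDCIProperty (QuaternionGroup n) m) :
    Odd n := by
  by_contra hodd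
  have hne : Even n := Nat.not_odd_iff_even.mp hodd
  have hn4 : 4 ≤ n := by
    obtain ⟨k, hk⟩ := hne
    omega
  rcases le_or_gt m 3 with h3 | h4
  · exact QDCIAux.small_case hne hn4 hn m hm1 h3 hDCI
  · exact QDCIAux.big_case hn hne m (by omega) hm2 hDCI
end

section
/- Let n ≥ 4 be an even integer and let G = Q_{4n} = ⟨a, b | a^{2n} = 1, b² = aⁿ, b⁻¹ab = a⁻¹⟩ be the generalized quaternion group of order 4n. Let H ⊆ ⟨a²⟩ and K ⊆ a⟨a²⟩ be subsets such that H⁻¹ = H, K⁻¹ = K and aⁿK = K. Then the Cayley digraphs Cay(G, bH ∪ K) and Cay(G, bH ∪ bK) are isomorphic. -/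
open Pointwise

open QuaternionGroup

variable {n : ℕ}

/-- parity homomorphism -/
def qpar (n : ℕ) : ZMod (2*n) →+* ZMod 2 := ZMod.castHom (dvd_mul_right 2 n) (ZMod 2)

lemma zmod_two_ne (x : ZMod 2) (h : ¬ x = 0) : x = 1 := by revert x; decide

lemma a_one_zpow (m : ℤ) : (QuaternionGroup.a 1 : QuaternionGroup n)^m
    = QuaternionGroup.a (m : ZMod (2*n)) := by
  cases m with
  | ofNat k => simpa using a_one_pow (n := n) k
  | negSucc k =>
    rw [zpow_negSucc, a_one_pow]
    have : (QuaternionGroup.a ((k+1 : ℕ)) : QuaternionGroup n)⁻¹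
        = QuaternionGroup.a (-((k+1 : ℕ) : ZMod (2*n))) := rfl
    rw [this]
    congr 1
    push_cast [Int.negSucc_eq]
    ring

def qf (n : ℕ) : QuaternionGroup n → QuaternionGroup n
  | .a i => if qpar n i = 0 then .a i else .xa i
  | .xa i => if qpar n i = 0 then .xa i else .a ((n : ZMod (2*n)) + i)

def qg (n : ℕ) : QuaternionGroup n → QuaternionGroup n
  | .a i => if qpar n i = 0 then .a i else .xa ((n : ZMod (2*n)) + i)
  | .xa i => if qpar n i = 0 then .xa i else .a i

lemma qf_a_even {i} (h : qpar n i = 0) : qf n (.a i) = .a i := by simp [qf, h]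
lemma qf_a_odd {i} (h : qpar n i = 1) : qf n (.a i) = .xa i := by simp [qf, h]
lemma qf_xa_even {i} (h : qpar n i = 0) : qf n (.xa i) = .xa i := by simp [qf, h]
lemma qf_xa_odd {i} (h : qpar n i = 1) : qf n (.xa i) = .a ((n : ZMod (2*n)) + i) := by
  simp [qf, h]
lemma qg_a_even {i} (h : qpar n i = 0) : qg n (.a i) = .a i := by simp [qg, h]
lemma qg_a_odd {i} (h : qpar n i = 1) : qg n (.a i) = .xa ((n : ZMod (2*n)) + i) := by
  simp [qg, h]
lemma qg_xa_even {i} (h : qpar n i = 0) : qg n (.xa i) = .xa i := by simp [qg, h]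
lemma qg_xa_odd {i} (h : qpar n i = 1) : qg n (.xa i) = .a i := by simp [qg, h]

lemma qnn : ((n : ZMod (2*n)) + n : ZMod (2*n)) = 0 := by
  rw [← Nat.cast_add, ← two_mul, ZMod.natCast_self]

lemma qpn (heven : Even n) : qpar n ((n : ℕ) : ZMod (2*n)) = 0 := by
  rw [map_natCast, ZMod.natCast_eq_zero_iff]
  exact heven.two_dvd

lemma qgf (heven : Even n) (x : QuaternionGroup n) : qg n (qf n x) = x := by
  cases x with
  | a i =>
    by_cases h : qpar n i = 0
    · rw [qf_a_even h, qg_a_even h]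
    · rw [qf_a_odd (zmod_two_ne _ h), qg_xa_odd (zmod_two_ne _ h)]
  | xa i =>
    by_cases h : qpar n i = 0
    · rw [qf_xa_even h, qg_xa_even h]
    · have h1 := zmod_two_ne _ h
      have hni : qpar n ((n : ZMod (2*n)) + i) = 1 := by
        rw [map_add, qpn heven, h1, zero_add]
      rw [qf_xa_odd h1, qg_a_odd hni]
      congr 1
      linear_combination (qnn (n := n))

lemma qfg (heven : Even n) (x : QuaternionGroup n) : qf n (qg n x) = x := by
  cases x with
  | a i =>
    by_cases h : qpar n i = 0
    · rw [qg_a_even h, qf_a_even h]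
    · have h1 := zmod_two_ne _ h
      have hni : qpar n ((n : ZMod (2*n)) + i) = 1 := by
        rw [map_add, qpn heven, h1, zero_add]
      rw [qg_a_odd h1, qf_xa_odd hni]
      congr 1
      linear_combination (qnn (n := n))
  | xa i =>
    by_cases h : qpar n i = 0
    · rw [qg_xa_even h, qf_xa_even h]
    · rw [qg_xa_odd (zmod_two_ne _ h), qf_a_odd (zmod_two_ne _ h)]

/-- The Claim in Lemma 3.1: for `G = Q_{4n}` with `n ≥ 4` even, `a = a(1)`, `b = xa(0)`,
if `H ⊆ ⟨a²⟩` and `K ⊆ a⟨a²⟩` satisfy `H⁻¹ = H`, `K⁻¹ = K` and `aⁿK = K`, then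
`Cay(G, bH ∪ K) ≅ Cay(G, bH ∪ bK)`. -/
theorem quaternion_claim_iso (n : ℕ) (hn : 4 ≤ n) (heven : Even n)
    (H K : Set (QuaternionGroup n))
    (hH : H ⊆ (Subgroup.zpowers ((QuaternionGroup.a 1 : QuaternionGroup n) ^ 2) : Set (QuaternionGroup n)))
    (hK : K ⊆ (QuaternionGroup.a 1 : QuaternionGroup n) •
      (Subgroup.zpowers ((QuaternionGroup.a 1 : QuaternionGroup n) ^ 2) : Set (QuaternionGroup n)))
    (hHinv : H⁻¹ = H) (hKinv : K⁻¹ = K)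
    (hKn : ((QuaternionGroup.a 1 : QuaternionGroup n) ^ n) • K = K) :
    CayleyIso ((QuaternionGroup.xa 0 : QuaternionGroup n) • H ∪ K)
      ((QuaternionGroup.xa 0 : QuaternionGroup n) • H ∪
        (QuaternionGroup.xa 0 : QuaternionGroup n) • K) := by
  classical
  set b : QuaternionGroup n := QuaternionGroup.xa 0 with hb
  -- structure of H and K
  have hHa : ∀ x ∈ H, ∃ i, x = QuaternionGroup.a i ∧ qpar n i = 0 := by
    intro x hx
    obtain ⟨m, hm⟩ := Subgroup.mem_zpowers_iff.mp (hH hx)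
    refine ⟨((2*m : ℤ) : ZMod (2*n)), ?_, ?_⟩
    · rw [← hm, ← zpow_natCast (QuaternionGroup.a 1 : QuaternionGroup n) 2, ← zpow_mul,
        a_one_zpow]
      norm_num
    · rw [map_intCast]
      have h2 : ((2*m:ℤ) : ZMod 2) = ((2:ℤ):ZMod 2) * (m : ZMod 2) := by push_cast; ring
      rw [h2, show ((2:ℤ):ZMod 2) = 0 by decide, zero_mul]
  have hKa : ∀ x ∈ K, ∃ i, x = QuaternionGroup.a i ∧ qpar n i = 1 := by
    intro x hx
    obtain ⟨y, hy, hxy⟩ := Set.mem_smul_set.mp (hK hx)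
    obtain ⟨m, hm⟩ := Subgroup.mem_zpowers_iff.mp hy
    refine ⟨(1 : ZMod (2*n)) + ((2*m : ℤ) : ZMod (2*n)), ?_, ?_⟩
    · rw [← hxy, ← hm, ← zpow_natCast (QuaternionGroup.a 1 : QuaternionGroup n) 2, ← zpow_mul,
        a_one_zpow, smul_eq_mul, a_mul_a]
      norm_num
    · rw [map_add, map_one, map_intCast]
      have h2 : ((2*m:ℤ) : ZMod 2) = ((2:ℤ):ZMod 2) * (m : ZMod 2) := by push_cast; ring
      rw [h2, show ((2:ℤ):ZMod 2) = 0 by decide, zero_mul, add_zero]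
  -- closure properties in index form
  have hHneg : ∀ i, QuaternionGroup.a i ∈ H → QuaternionGroup.a (-i) ∈ H := by
    intro i hi
    rw [← hHinv]
    have : (QuaternionGroup.a (-i) : QuaternionGroup n)⁻¹ = QuaternionGroup.a i := by
      show QuaternionGroup.a (-(-i)) = _
      rw [neg_neg]
    rw [Set.mem_inv, this]
    exact hi
  have hKneg : ∀ i, QuaternionGroup.a i ∈ K → QuaternionGroup.a (-i) ∈ K := by
    intro i hi
    rw [← hKinv]
    have : (QuaternionGroup.a (-i) : QuaternionGroup n)⁻¹ = QuaternionGroup.a i := by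
      show QuaternionGroup.a (-(-i)) = _
      rw [neg_neg]
    rw [Set.mem_inv, this]
    exact hi
  have hKsh : ∀ i, QuaternionGroup.a i ∈ K →
      QuaternionGroup.a ((n : ZMod (2*n)) + i) ∈ K := by
    intro i hi
    rw [← hKn]
    refine Set.mem_smul_set.mpr ⟨_, hi, ?_⟩
    rw [a_one_pow, smul_eq_mul, a_mul_a]
  -- membership helpers for the unions
  have hbH : ∀ i, QuaternionGroup.a i ∈ H → QuaternionGroup.xa i ∈ b • H := by
    intro i hi
    refine Set.mem_smul_set.mpr ⟨_, hi, ?_⟩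
    rw [hb, smul_eq_mul, xa_mul_a, zero_add]
  have hbK : ∀ i, QuaternionGroup.a i ∈ K → QuaternionGroup.xa i ∈ b • K := by
    intro i hi
    refine Set.mem_smul_set.mpr ⟨_, hi, ?_⟩
    rw [hb, smul_eq_mul, xa_mul_a, zero_add]
  have pn : qpar n ((n : ℕ) : ZMod (2*n)) = 0 := qpn heven
  have nn : ((n : ZMod (2*n)) + n : ZMod (2*n)) = 0 := qnn
  -- forward direction
  have fwd : ∀ u v : QuaternionGroup n, CayleyArc (b • H ∪ K) u v →
      CayleyArc (b • H ∪ b • K) (qf n u) (qf n v) := by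
    rintro u v ⟨s, hs, rfl⟩
    rcases hs with hs | hs
    · -- s = b * h, h = a i ∈ H
      obtain ⟨h, hh, rfl⟩ := Set.mem_smul_set.mp hs
      obtain ⟨i, rfl, hpi⟩ := hHa h hh
      rw [hb, smul_eq_mul, xa_mul_a, zero_add]
      cases u with
      | a j =>
        rw [xa_mul_a]
        by_cases hj : qpar n j = 0
        · have hv : qpar n (i + j) = 0 := by rw [map_add, hpi, hj, add_zero]
          exact ⟨QuaternionGroup.xa i, Or.inl (hbH i hh),
            by rw [qf_a_even hj, qf_xa_even hv, xa_mul_a]⟩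
        · have hj1 := zmod_two_ne _ hj
          have hv : qpar n (i + j) = 1 := by rw [map_add, hpi, hj1, zero_add]
          refine ⟨QuaternionGroup.xa (-i), Or.inl (hbH (-i) (hHneg i hh)), ?_⟩
          rw [qf_a_odd hj1, qf_xa_odd hv, xa_mul_xa]
          congr 1; ring
      | xa j =>
        rw [xa_mul_xa]
        by_cases hj : qpar n j = 0
        · have hv : qpar n ((n : ZMod (2*n)) + j - i) = 0 := by
            rw [map_sub, map_add, pn, hpi, hj]; decide
          exact ⟨QuaternionGroup.xa i, Or.inl (hbH i hh),
            by rw [qf_xa_even hj, qf_a_even hv, xa_mul_xa]⟩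
        · have hj1 := zmod_two_ne _ hj
          have hv : qpar n ((n : ZMod (2*n)) + j - i) = 1 := by
            rw [map_sub, map_add, pn, hpi, hj1]; decide
          have hu : qpar n ((n : ZMod (2*n)) + j) = 1 := by
            rw [map_add, pn, hj1, zero_add]
          refine ⟨QuaternionGroup.xa (-i), Or.inl (hbH (-i) (hHneg i hh)), ?_⟩
          rw [qf_xa_odd hj1, qf_a_odd hv, xa_mul_a]
          congr 1; ring
    · -- s = a i ∈ K
      obtain ⟨i, rfl, hpi⟩ := hKa _ hs
      cases u with
      | a j =>
        rw [a_mul_a]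
        by_cases hj : qpar n j = 0
        · have hv : qpar n (i + j) = 1 := by rw [map_add, hpi, hj, add_zero]
          exact ⟨QuaternionGroup.xa i, Or.inr (hbK i hs),
            by rw [qf_a_even hj, qf_a_odd hv, xa_mul_a]⟩
        · have hj1 := zmod_two_ne _ hj
          have hv : qpar n (i + j) = 0 := by rw [map_add, hpi, hj1]; decide
          refine ⟨QuaternionGroup.xa ((n : ZMod (2*n)) + (-i)),
            Or.inr (hbK _ (hKsh _ (hKneg i hs))), ?_⟩
          rw [qf_a_odd hj1, qf_a_even hv, xa_mul_xa]
          congr 1; ring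
      | xa j =>
        rw [a_mul_xa]
        by_cases hj : qpar n j = 0
        · have hv : qpar n (j - i) = 1 := by rw [map_sub, hpi, hj]; decide
          refine ⟨QuaternionGroup.xa i, Or.inr (hbK i hs), ?_⟩
          rw [qf_xa_even hj, qf_xa_odd hv, xa_mul_xa]
          congr 1; ring
        · have hj1 := zmod_two_ne _ hj
          have hv : qpar n (j - i) = 0 := by rw [map_sub, hpi, hj1]; decide
          have hu : qpar n ((n : ZMod (2*n)) + j) = 1 := by
            rw [map_add, pn, hj1, zero_add]
          refine ⟨QuaternionGroup.xa (-((n : ZMod (2*n)) + i)),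
            Or.inr (hbK _ (hKneg _ (hKsh i hs))), ?_⟩
          rw [qf_xa_odd hj1, qf_xa_even hv, xa_mul_a]
          congr 1; ring
  -- backward direction (on the inverse map qg)
  have bwd : ∀ u v : QuaternionGroup n, CayleyArc (b • H ∪ b • K) u v →
      CayleyArc (b • H ∪ K) (qg n u) (qg n v) := by
    rintro u v ⟨s, hs, rfl⟩
    rcases hs with hs | hs
    · -- s = xa i, a i ∈ H
      obtain ⟨h, hh, rfl⟩ := Set.mem_smul_set.mp hs
      obtain ⟨i, rfl, hpi⟩ := hHa h hh
      rw [hb, smul_eq_mul, xa_mul_a, zero_add]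
      cases u with
      | a j =>
        rw [xa_mul_a]
        by_cases hj : qpar n j = 0
        · have hv : qpar n (i + j) = 0 := by rw [map_add, hpi, hj, add_zero]
          exact ⟨QuaternionGroup.xa i, Or.inl (hbH i hh),
            by rw [qg_a_even hj, qg_xa_even hv, xa_mul_a]⟩
        · have hj1 := zmod_two_ne _ hj
          have hv : qpar n (i + j) = 1 := by rw [map_add, hpi, hj1, zero_add]
          have hu : qpar n ((n : ZMod (2*n)) + j) = 1 := by
            rw [map_add, pn, hj1, zero_add]
          refine ⟨QuaternionGroup.xa (-i), Or.inl (hbH (-i) (hHneg i hh)), ?_⟩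
          rw [qg_a_odd hj1, qg_xa_odd hv, xa_mul_xa]
          congr 1; linear_combination -nn
      | xa j =>
        rw [xa_mul_xa]
        by_cases hj : qpar n j = 0
        · have hv : qpar n ((n : ZMod (2*n)) + j - i) = 0 := by
            rw [map_sub, map_add, pn, hpi, hj]; decide
          exact ⟨QuaternionGroup.xa i, Or.inl (hbH i hh),
            by rw [qg_xa_even hj, qg_a_even hv, xa_mul_xa]⟩
        · have hj1 := zmod_two_ne _ hj
          have hv : qpar n ((n : ZMod (2*n)) + j - i) = 1 := by
            rw [map_sub, map_add, pn, hpi, hj1]; decide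
          refine ⟨QuaternionGroup.xa (-i), Or.inl (hbH (-i) (hHneg i hh)), ?_⟩
          rw [qg_xa_odd hj1, qg_a_odd hv, xa_mul_a]
          congr 1; linear_combination nn
    · -- s = xa i, a i ∈ K
      obtain ⟨h, hh, rfl⟩ := Set.mem_smul_set.mp hs
      obtain ⟨i, rfl, hpi⟩ := hKa h hh
      rw [hb, smul_eq_mul, xa_mul_a, zero_add]
      cases u with
      | a j =>
        rw [xa_mul_a]
        by_cases hj : qpar n j = 0
        · have hv : qpar n (i + j) = 1 := by rw [map_add, hpi, hj, add_zero]
          exact ⟨QuaternionGroup.a i, Or.inr hh,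
            by rw [qg_a_even hj, qg_xa_odd hv, a_mul_a]⟩
        · have hj1 := zmod_two_ne _ hj
          have hv : qpar n (i + j) = 0 := by rw [map_add, hpi, hj1]; decide
          have hu : qpar n ((n : ZMod (2*n)) + j) = 1 := by
            rw [map_add, pn, hj1, zero_add]
          refine ⟨QuaternionGroup.a ((n : ZMod (2*n)) + (-i)),
            Or.inr (hKsh _ (hKneg i hh)), ?_⟩
          rw [qg_a_odd hj1, qg_xa_even hv, a_mul_xa]
          congr 1; ring
      | xa j =>
        rw [xa_mul_xa]
        by_cases hj : qpar n j = 0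
        · have hv : qpar n ((n : ZMod (2*n)) + j - i) = 1 := by
            rw [map_sub, map_add, pn, hpi, hj]; decide
          refine ⟨QuaternionGroup.a i, Or.inr hh, ?_⟩
          rw [qg_xa_even hj, qg_a_odd hv, a_mul_xa]
          congr 1; linear_combination nn
        · have hj1 := zmod_two_ne _ hj
          have hv : qpar n ((n : ZMod (2*n)) + j - i) = 0 := by
            rw [map_sub, map_add, pn, hpi, hj1]; decide
          refine ⟨QuaternionGroup.a ((n : ZMod (2*n)) + (-i)),
            Or.inr (hKsh _ (hKneg i hh)), ?_⟩
          rw [qg_xa_odd hj1, qg_a_even hv, a_mul_a]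
          congr 1; ring
  refine ⟨⟨qf n, qg n, qgf heven, qfg heven⟩, fun u v => ⟨?_, ?_⟩⟩
  · intro h
    exact fwd u v h
  · intro h
    have := bwd _ _ h
    simpa [qgf heven] using this
end

section
/- Let Γ be a finite connected digraph, let G be a group of automorphisms of Γ acting transitively on the vertices of Γ, and suppose Γ is G-locally primitive, i.e., for every vertex u the stabilizer G_u acts primitively on the out-neighborhood Γ⁺(u). Let N be a normal subgroup of G with at least two orbits on the vertex set. Then either (i) N equals the kernel of the action of G on the set of N-orbits, N acts semiregularly on the vertices of Γ, Γ is an N-cover of the quotient digraph Γ_N, and Γ_N has at least 3 vertices, or (ii) the quotient digraph Γ_N is a directed cycle, i.e., every vertex of Γ_N has exactly one out-neighbor in Γ_N. -/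
/-- The orbit equivalence relation on `V` induced by a subgroup `N` of `Sym(V)`. -/
def orbSetoid {V : Type*} (N : Subgroup (Equiv.Perm V)) : Setoid V where
  r u v := ∃ h ∈ N, h u = v
  iseqv := by
    refine ⟨fun u => ⟨1, N.one_mem, rfl⟩, ?_, ?_⟩
    · rintro u v ⟨h, hh, rfl⟩
      exact ⟨h⁻¹, N.inv_mem hh, by simp⟩
    · rintro u v w ⟨h, hh, rfl⟩ ⟨k, hk, rfl⟩
      exact ⟨k * h, N.mul_mem hk hh, by simp⟩

/-- The arc relation of the quotient digraph `Γ_N`: there is an arc from one `N`-orbit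
to a distinct `N`-orbit iff there is an arc of `Γ` from a vertex of the first to a
vertex of the second. -/
def quotArc {V : Type*} (N : Subgroup (Equiv.Perm V)) (r : V → V → Prop)
    (x y : Quotient (orbSetoid N)) : Prop :=
  x ≠ y ∧ ∃ u v : V, Quotient.mk (orbSetoid N) u = x ∧
    Quotient.mk (orbSetoid N) v = y ∧ r u v

/-- A set `P` of permutations of `V` acts primitively on a subset `Ω` of `V`:
`Ω` is invariant, the action on `Ω` is transitive, and every block is trivial. -/
def PrimitiveOn {V : Type*} (P : Set (Equiv.Perm V)) (Ω : Set V) : Prop :=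
  (∀ g ∈ P, ∀ v ∈ Ω, g v ∈ Ω) ∧
  (∀ v ∈ Ω, ∀ w ∈ Ω, ∃ g ∈ P, g v = w) ∧
  ∀ B : Set V, B ⊆ Ω →
    (∀ g ∈ P, (fun v => g v) '' B = B ∨ Disjoint ((fun v => g v) '' B) B) →
    B.Subsingleton ∨ B = Ω

lemma inOrbit_inNbr_unique {V : Type*} [Fintype V] (r : V → V → Prop)
    (G N : Subgroup (Equiv.Perm V)) (hNG : N ≤ G)
    (hGaut : ∀ g ∈ G, ∀ u v : V, r u v ↔ r (g u) (g v))
    (hvtrans : ∀ u v : V, ∃ g ∈ G, g u = v)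
    (hnorm : ∀ g ∈ G, ∀ h ∈ N, g * h * g⁻¹ ∈ N)
    (B1 : ∀ u x y : V, r u x → r u y → (∃ h ∈ N, h x = y) → x = y)
    (v w w' : V) (hwv : r w v) (hw'v : r w' v) (hww' : ∃ h ∈ N, h w = w') : w = w' := by
  classical
  set Bf : Finset V := Finset.univ.filter (fun b => ∃ n ∈ N, n w = b) with hBf
  set Cf : Finset V := Finset.univ.filter (fun b => ∃ n ∈ N, n v = b) with hCf
  set E : Finset (V × V) := (Bf ×ˢ Cf).filter (fun p => r p.1 p.2) with hE
  have hmemB : ∀ b, b ∈ Bf ↔ ∃ n ∈ N, n w = b := by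
    intro b; simp [hBf]
  have hmemC : ∀ b, b ∈ Cf ↔ ∃ n ∈ N, n v = b := by
    intro b; simp [hCf]
  have hmemE : ∀ p : V × V, p ∈ E ↔ (p.1 ∈ Bf ∧ p.2 ∈ Cf) ∧ r p.1 p.2 := by
    intro p; simp [hE, Finset.mem_filter, Finset.mem_product, and_assoc]
  -- |Bf| = |Cf|
  obtain ⟨g, hgG, hgw⟩ := hvtrans w v
  have hBC : Bf.card = Cf.card := by
    apply Finset.card_bij (fun b _ => g b)
    · intro b hb
      obtain ⟨n, hn, hnw⟩ := (hmemB b).1 hb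
      exact (hmemC (g b)).2 ⟨g * n * g⁻¹, hnorm g hgG n hn, by
        simp [Equiv.Perm.mul_apply, ← hgw, hnw]⟩
    · intro a _ b _ hab; exact g.injective hab
    · intro c hc
      obtain ⟨m, hm, hmv⟩ := (hmemC c).1 hc
      refine ⟨g⁻¹ c, (hmemB _).2 ⟨g⁻¹ * m * g, ?_, ?_⟩, by simp⟩
      · have := hnorm g⁻¹ (inv_mem hgG) m hm; simpa using this
      · simp [Equiv.Perm.mul_apply, hgw, hmv]
  -- |E| = |Bf|
  have hEB : E.card = Bf.card := by
    apply Finset.card_bij (fun p _ => p.1)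
    · intro p hp; exact ((hmemE p).1 hp).1.1
    · intro p hp q hq hpq
      have h1 := (hmemE p).1 hp
      have h2 := (hmemE q).1 hq
      obtain ⟨n1, hn1, e1⟩ := (hmemC p.2).1 h1.1.2
      obtain ⟨n2, hn2, e2⟩ := (hmemC q.2).1 h2.1.2
      have : p.2 = q.2 := by
        apply B1 p.1 p.2 q.2 h1.2 (hpq ▸ h2.2)
        exact ⟨n2 * n1⁻¹, mul_mem hn2 (inv_mem hn1), by
          rw [Equiv.Perm.mul_apply, ← e1]; simp [e2]⟩
      exact Prod.ext hpq this
    · intro b hb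
      obtain ⟨n, hn, hnw⟩ := (hmemB b).1 hb
      refine ⟨(b, n v), (hmemE _).2 ⟨⟨hb, (hmemC _).2 ⟨n, hn, rfl⟩⟩, ?_⟩, rfl⟩
      have := (hGaut n (hNG hn) w v).1 hwv
      rwa [hnw] at this
  -- fibers over Cf all have the same size
  have hfib : ∀ c ∈ Cf, (E.filter (fun p => p.2 = c)).card
      = (E.filter (fun p => p.2 = v)).card := by
    intro c hc
    obtain ⟨n, hn, hnv⟩ := (hmemC c).1 hc
    apply Finset.card_bij (fun p _ => ((n⁻¹ : Equiv.Perm V) p.1, v))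
    · intro p hp
      obtain ⟨hpE, hp2⟩ := Finset.mem_filter.1 hp
      obtain ⟨⟨hp1B, _⟩, hpr⟩ := (hmemE p).1 hpE
      refine Finset.mem_filter.2 ⟨(hmemE _).2 ⟨⟨?_, (hmemC v).2 ⟨1, one_mem N, by simp⟩⟩, ?_⟩, rfl⟩
      · obtain ⟨m, hm, hmw⟩ := (hmemB p.1).1 hp1B
        exact (hmemB _).2 ⟨n⁻¹ * m, mul_mem (inv_mem hn) hm, by simp [Equiv.Perm.mul_apply, hmw]⟩
      · have := (hGaut n⁻¹ (hNG (inv_mem hn)) p.1 p.2).1 hpr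
        rwa [hp2, ← hnv, Equiv.Perm.coe_inv, Equiv.symm_apply_apply] at this
    · intro p hp q hq hpq
      obtain ⟨hpE, hp2⟩ := Finset.mem_filter.1 hp
      obtain ⟨hqE, hq2⟩ := Finset.mem_filter.1 hq
      have h1 : (n⁻¹ : Equiv.Perm V) p.1 = (n⁻¹ : Equiv.Perm V) q.1 := congrArg Prod.fst hpq
      have := (n⁻¹ : Equiv.Perm V).injective h1
      exact Prod.ext this (hp2.trans hq2.symm)
    · intro q hq
      obtain ⟨hqE, hq2⟩ := Finset.mem_filter.1 hq
      obtain ⟨⟨hq1B, _⟩, hqr⟩ := (hmemE q).1 hqE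
      refine ⟨(n q.1, c), Finset.mem_filter.2 ⟨(hmemE _).2 ⟨⟨?_, hc⟩, ?_⟩, rfl⟩, ?_⟩
      · obtain ⟨m, hm, hmw⟩ := (hmemB q.1).1 hq1B
        exact (hmemB _).2 ⟨n * m, mul_mem hn hm, by simp [Equiv.Perm.mul_apply, hmw]⟩
      · have := (hGaut n (hNG hn) q.1 q.2).1 hqr
        simpa [hq2, hnv] using this
      · simp only [Equiv.Perm.coe_inv, Equiv.symm_apply_apply]
        exact Prod.ext rfl hq2.symm
  have hcv : v ∈ Cf := (hmemC v).2 ⟨1, one_mem N, by simp⟩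
  have hEsum : E.card = Cf.card * (E.filter (fun p => p.2 = v)).card := by
    rw [Finset.card_eq_sum_card_fiberwise (f := Prod.snd) (t := Cf)
      (fun p hp => ((hmemE p).1 hp).1.2)]
    rw [Finset.sum_congr rfl (fun c hc => hfib c hc), Finset.sum_const, smul_eq_mul]
  have hCpos : 0 < Cf.card := Finset.card_pos.2 ⟨v, hcv⟩
  have hd1 : (E.filter (fun p => p.2 = v)).card = 1 := by
    have : Cf.card * 1 = Cf.card * (E.filter (fun p => p.2 = v)).card := by
      rw [mul_one, ← hEsum, hEB, hBC]
    exact (Nat.eq_of_mul_eq_mul_left hCpos this).symm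
  have hwmem : (w, v) ∈ E.filter (fun p => p.2 = v) :=
    Finset.mem_filter.2 ⟨(hmemE _).2 ⟨⟨(hmemB w).2 ⟨1, one_mem N, by simp⟩, hcv⟩, hwv⟩, rfl⟩
  have hw'mem : (w', v) ∈ E.filter (fun p => p.2 = v) :=
    Finset.mem_filter.2 ⟨(hmemE _).2 ⟨⟨(hmemB w').2 hww', hcv⟩, hw'v⟩, rfl⟩
  have := Finset.card_le_one.1 (le_of_eq hd1) _ hwmem _ hw'mem
  exact congrArg Prod.fst this

/-- Lemma 2.7(b): let `Γ` be a finite connected `G`-vertex-transitive, `G`-locally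
primitive digraph and let `N ⊴ G` have at least two orbits on the vertices. Then either
`N` is the kernel of `G` on the `N`-orbits acting semiregularly on vertices and `Γ` is
an `N`-cover of the quotient digraph `Γ_N` with `|V(Γ_N)| ≥ 3`, or `Γ_N` is a directed
cycle (every vertex of `Γ_N` has exactly one out-neighbour). -/
theorem locally_primitive_quotient (V : Type*) [Fintype V] (r : V → V → Prop)
    (hirr : ∀ v : V, ¬ r v v)
    (hconn : (SimpleGraph.fromRel r).Connected)
    (G : Subgroup (Equiv.Perm V))
    (hGaut : ∀ g ∈ G, ∀ u v : V, r u v ↔ r (g u) (g v))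
    (hvtrans : ∀ u v : V, ∃ g ∈ G, g u = v)
    (hlocprim : ∀ u : V,
      PrimitiveOn {g : Equiv.Perm V | g ∈ G ∧ g u = u} {v : V | r u v})
    (N : Subgroup (Equiv.Perm V)) (hNG : N ≤ G)
    (hnorm : ∀ g ∈ G, ∀ h ∈ N, g * h * g⁻¹ ∈ N)
    (htwoorb : ∃ u v : V, ¬ ∃ h ∈ N, h u = v) :
    ((∀ g : Equiv.Perm V, g ∈ N ↔ g ∈ G ∧
        ∀ u : V, Quotient.mk (orbSetoid N) (g u) = Quotient.mk (orbSetoid N) u) ∧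
      (∀ h ∈ N, ∀ u : V, h u = u → h = 1) ∧
      (∀ u : V, Set.ncard {v : V | r u v} =
        Set.ncard {y : Quotient (orbSetoid N) | quotArc N r (Quotient.mk (orbSetoid N) u) y}) ∧
      3 ≤ Nat.card (Quotient (orbSetoid N)))
    ∨ (∀ x : Quotient (orbSetoid N), Set.ncard {y | quotArc N r x y} = 1) := by
  classical
  have hmk : ∀ u v : V, Quotient.mk (orbSetoid N) u = Quotient.mk (orbSetoid N) v ↔
      ∃ h ∈ N, h u = v :=
    fun u v => ⟨fun e => Quotient.exact e, fun h => Quotient.sound h⟩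
  have hGarc : ∀ g ∈ G, ∀ u v : V, r u v → r (g u) (g v) :=
    fun g hg u v h => (hGaut g hg u v).1 h
  -- there is at least one arc
  have hedge : ∃ a b : V, r a b := by
    obtain ⟨u0, v0, hno⟩ := htwoorb
    have hne : u0 ≠ v0 := fun e => hno ⟨1, one_mem N, by simp [e]⟩
    obtain ⟨p⟩ := hconn.preconnected u0 v0
    cases p with
    | nil => exact absurd rfl hne
    | cons hadj _ =>
      rcases (SimpleGraph.fromRel_adj r _ _).1 hadj with ⟨-, h | h⟩
      · exact ⟨_, _, h⟩
      · exact ⟨_, _, h⟩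
  have hout : ∀ u : V, ∃ v, r u v := by
    obtain ⟨a, b, hab⟩ := hedge
    intro u
    obtain ⟨g, hg, hga⟩ := hvtrans a u
    exact ⟨g b, hga ▸ hGarc g hg a b hab⟩
  -- walk closure principle
  have hwalk : ∀ (F : Set V), (∀ a, a ∈ F → ∀ b, r a b → b ∈ F) →
      (∀ a, a ∈ F → ∀ b, r b a → b ∈ F) → ∀ a, a ∈ F → ∀ b, b ∈ F := by
    intro F hfwd hbwd a ha b
    obtain ⟨p⟩ := hconn.preconnected a b
    suffices H : ∀ (x y : V) (p : (SimpleGraph.fromRel r).Walk x y), x ∈ F → y ∈ F by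
      exact H a b p ha
    intro x y p
    induction p with
    | nil => exact fun h => h
    | cons hadj p ih =>
      intro hx
      rcases (SimpleGraph.fromRel_adj r _ _).1 hadj with ⟨-, h | h⟩
      · exact ih (hfwd _ hx _ h)
      · exact ih (hbwd _ hx _ h)
  by_cases hcase : ∀ u x y : V, r u x → r u y → ∃ h ∈ N, h x = y
  · -- Case (ii): quotient is a directed cycle
    right
    intro x
    obtain ⟨u, rfl⟩ := Quotient.exists_rep x
    obtain ⟨v, huv⟩ := hout u
    have hvu : ¬ ∃ h ∈ N, h u = v := by
      rintro ⟨h, hhN, hhv⟩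
      -- every arc stays within an N-orbit
      have step : ∀ a b : V, r a b → ∃ n ∈ N, n a = b := by
        intro a b hab
        obtain ⟨g, hgG, hgu⟩ := hvtrans u a
        have h1 : r a (g v) := hgu ▸ hGarc g hgG u v huv
        obtain ⟨m, hmN, hmv⟩ := hcase a (g v) b h1 hab
        refine ⟨m * (g * h * g⁻¹), mul_mem hmN (hnorm g hgG h hhN), ?_⟩
        have hga : (g⁻¹ : Equiv.Perm V) a = u := by rw [← hgu]; simp
        simp only [Equiv.Perm.mul_apply, hga, hhv, hmv]
      obtain ⟨u0, v0, hno⟩ := htwoorb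
      refine hno ?_
      refine hwalk {x | ∃ n ∈ N, n u0 = x} ?_ ?_ u0 ⟨1, one_mem N, by simp⟩ v0
      · rintro a ⟨n, hnN, hna⟩ b hab
        obtain ⟨m, hmN, hmb⟩ := step a b hab
        exact ⟨m * n, mul_mem hmN hnN, by simp [Equiv.Perm.mul_apply, hna, hmb]⟩
      · rintro a ⟨n, hnN, hna⟩ b hba
        obtain ⟨m, hmN, hmb⟩ := step b a hba
        exact ⟨m⁻¹ * n, mul_mem (inv_mem hmN) hnN, by
          simp only [Equiv.Perm.mul_apply, hna, ← hmb, Equiv.Perm.coe_inv, Equiv.symm_apply_apply]⟩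
    have hsingle : {y | quotArc N r (Quotient.mk (orbSetoid N) u) y}
        = {Quotient.mk (orbSetoid N) v} := by
      apply Set.eq_singleton_iff_unique_mem.2
      constructor
      · exact ⟨fun e => hvu ((hmk u v).1 e), u, v, rfl, rfl, huv⟩
      · rintro y ⟨hne, u', v', hu', hv', harc⟩
        obtain ⟨h, hh, e⟩ := (hmk u' u).1 hu'
        have h2 : r u (h v') := e ▸ hGarc h (hNG hh) u' v' harc
        obtain ⟨m, hm, e2⟩ := hcase u (h v') v h2 huv
        rw [← hv']
        exact ((hmk v' v).2 ⟨m * h, mul_mem hm hh, by simp [Equiv.Perm.mul_apply, e2]⟩)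
    rw [hsingle, Set.ncard_singleton]
  · -- Case B
    push_neg at hcase
    obtain ⟨u0, x0, y0, hux0, huy0, hnxy0⟩ := hcase
    have hnxy : ¬ ∃ h ∈ N, h x0 = y0 := by
      rintro ⟨h, hh, e⟩; exact hnxy0 h hh e
    -- B1 at u0: each N-orbit meets the out-neighbourhood of u0 at most once
    have B1u0 : ∀ x y : V, r u0 x → r u0 y → (∃ h ∈ N, h x = y) → x = y := by
      intro x y hx hy hrel
      obtain ⟨hinv, htpt, hblocks⟩ := hlocprim u0
      have key := hblocks {v | r u0 v ∧ ∃ n ∈ N, n x = v} (fun v hv => hv.1) ?_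
      · rcases key with hss | heq
        · exact hss ⟨hx, 1, one_mem N, by simp⟩ ⟨hy, hrel⟩
        · exfalso
          obtain ⟨-, n1, hn1, e1⟩ := (Set.ext_iff.1 heq x0).2 hux0
          obtain ⟨-, n2, hn2, e2⟩ := (Set.ext_iff.1 heq y0).2 huy0
          refine hnxy ⟨n2 * n1⁻¹, mul_mem hn2 (inv_mem hn1), ?_⟩
          rw [Equiv.Perm.mul_apply, ← e1, Equiv.Perm.coe_inv, Equiv.symm_apply_apply, e2]
      · -- block condition
        rintro g ⟨hgG, hgu0⟩
        have himg : (fun v => g v) '' {v | r u0 v ∧ ∃ n ∈ N, n x = v}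
            = {v | r u0 v ∧ ∃ n ∈ N, n (g x) = v} := by
          ext z
          constructor
          · rintro ⟨w, ⟨hw1, n, hnN, hnx⟩, rfl⟩
            refine ⟨?_, g * n * g⁻¹, hnorm g hgG n hnN, by
              simp [Equiv.Perm.mul_apply, hnx]⟩
            have := hGarc g hgG u0 w hw1
            rwa [hgu0] at this
          · rintro ⟨hz1, n, hnN, hnz⟩
            refine ⟨g⁻¹ z, ⟨?_, g⁻¹ * n * g, ?_, by simp [Equiv.Perm.mul_apply, hnz]⟩, by simp⟩
            · refine (hGaut g hgG u0 (g⁻¹ z)).2 ?_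
              rw [hgu0, Equiv.Perm.coe_inv, Equiv.apply_symm_apply]
              exact hz1
            · have := hnorm g⁻¹ (inv_mem hgG) n hnN
              simpa using this
        by_cases hsame : ∃ n ∈ N, n x = g x
        · left
          rw [himg]
          obtain ⟨m, hm, em⟩ := hsame
          have hminv : (m⁻¹ : Equiv.Perm V) (g x) = x := by rw [← em]; simp
          ext z
          simp only [Set.mem_setOf_eq]
          constructor
          · rintro ⟨h1, n, hn, e⟩
            exact ⟨h1, n * m, mul_mem hn hm, by rw [Equiv.Perm.mul_apply, em, e]⟩
          · rintro ⟨h1, n, hn, e⟩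
            exact ⟨h1, n * m⁻¹, mul_mem hn (inv_mem hm), by
              rw [Equiv.Perm.mul_apply, hminv, e]⟩
        · right
          rw [himg, Set.disjoint_left]
          rintro z ⟨-, n, hn, e⟩ ⟨-, m, hm, e'⟩
          refine hsame ⟨n⁻¹ * m, mul_mem (inv_mem hn) hm, ?_⟩
          rw [Equiv.Perm.mul_apply, e', ← e, Equiv.Perm.coe_inv, Equiv.symm_apply_apply]
    -- B1 everywhere
    have B1 : ∀ u x y : V, r u x → r u y → (∃ h ∈ N, h x = y) → x = y := by
      rintro u x y hx hy ⟨h, hhN, hhxy⟩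
      obtain ⟨g, hgG, hgu⟩ := hvtrans u u0
      refine g.injective (B1u0 (g x) (g y) (hgu ▸ hGarc g hgG u x hx)
        (hgu ▸ hGarc g hgG u y hy) ⟨g * h * g⁻¹, hnorm g hgG h hhN, ?_⟩)
      simp [Equiv.Perm.mul_apply, hhxy]
    -- B2: no arcs within an orbit
    have B2 : ∀ u v : V, r u v → ¬ ∃ h ∈ N, h u = v := by
      rintro u v huv ⟨h, hhN, hhuv⟩
      refine hnxy ?_
      have hsub : ∀ a z : V, r a z → ∃ n ∈ N, n a = z := by
        intro a z haz
        obtain ⟨g, hgG, hgu⟩ := hvtrans u a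
        have h1 : r a (g v) := hgu ▸ hGarc g hgG u v huv
        have h2 : (g * h * g⁻¹) a = g v := by
          have hga : (g⁻¹ : Equiv.Perm V) a = u := by rw [← hgu]; simp
          simp only [Equiv.Perm.mul_apply, hga, hhuv]
        obtain ⟨-, htpt, -⟩ := hlocprim a
        obtain ⟨k, ⟨hkG, hka⟩, hkz⟩ := htpt (g v) h1 z haz
        refine ⟨k * (g * h * g⁻¹) * k⁻¹, hnorm k hkG _ (hnorm g hgG h hhN), ?_⟩
        have hka' : (k⁻¹ : Equiv.Perm V) a = a := by
          conv_lhs => rw [← hka]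
          simp
        simp only [Equiv.Perm.mul_apply, hka', h2, hkz]
      obtain ⟨n1, hn1, e1⟩ := hsub u0 x0 hux0
      obtain ⟨n2, hn2, e2⟩ := hsub u0 y0 huy0
      exact ⟨n2 * n1⁻¹, mul_mem hn2 (inv_mem hn1), by
        rw [Equiv.Perm.mul_apply, ← e1, Equiv.Perm.coe_inv, Equiv.symm_apply_apply, e2]⟩
    -- B4: each N-orbit meets the in-neighbourhood at most once
    have B4 : ∀ v w w' : V, r w v → r w' v → (∃ h ∈ N, h w = w') → w = w' :=
      fun v w w' => inOrbit_inNbr_unique r G N hNG hGaut hvtrans hnorm B1 v w w'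
    -- B5: orbit-fixing automorphisms with a fixed point are trivial
    have B5 : ∀ k : Equiv.Perm V, k ∈ G → (∀ x : V, ∃ n ∈ N, n x = k x) →
        ∀ u : V, k u = u → k = 1 := by
      intro k hkG hkorb u hku
      have hfix : ∀ v : V, k v = v := by
        refine hwalk {v | k v = v} ?_ ?_ u hku
        · intro a ha b hab
          have h1 : r a (k b) := by
            have := hGarc k hkG a b hab
            rwa [ha] at this
          exact (B1 a b (k b) hab h1 (hkorb b)).symm
        · intro a ha b hba
          have h1 : r (k b) a := by
            have := hGarc k hkG b a hba
            rwa [ha] at this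
          exact (B4 a b (k b) hba h1 (hkorb b)).symm
      exact Equiv.ext fun v => hfix v
    left
    refine ⟨?_, ?_, ?_, ?_⟩
    · -- N is the kernel
      intro g
      constructor
      · intro hgN
        exact ⟨hNG hgN, fun u => (hmk (g u) u).2 ⟨g⁻¹, inv_mem hgN, by simp⟩⟩
      · rintro ⟨hgG, hfixorb⟩
        have hgorb : ∀ x : V, ∃ n ∈ N, n x = g x := by
          intro x
          obtain ⟨h, hh, e⟩ := (hmk (g x) x).1 (hfixorb x)
          have e2 : (h⁻¹ : Equiv.Perm V) (h (g x)) = (h⁻¹ : Equiv.Perm V) x :=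
            congrArg (fun z => (h⁻¹ : Equiv.Perm V) z) e
          simp only [Equiv.Perm.coe_inv, Equiv.symm_apply_apply] at e2
          exact ⟨h⁻¹, inv_mem hh, e2.symm⟩
        obtain ⟨u1, -, -⟩ := htwoorb
        obtain ⟨n, hnN, hnu⟩ := hgorb u1
        have h1 : (n⁻¹ * g : Equiv.Perm V) = 1 := by
          refine B5 (n⁻¹ * g) (mul_mem (inv_mem (hNG hnN)) hgG) ?_ u1 ?_
          · intro x
            obtain ⟨m, hm, em⟩ := hgorb x
            exact ⟨n⁻¹ * m, mul_mem (inv_mem hnN) hm, by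
              simp [Equiv.Perm.mul_apply, em]⟩
          · simp [Equiv.Perm.mul_apply, ← hnu]
        have : g = n := by
          have := inv_mul_eq_one.1 h1
          exact this.symm
        exact this ▸ hnN
    · -- semiregular
      intro h hhN u hu
      exact B5 h (hNG hhN) (fun x => ⟨h, hhN, rfl⟩) u hu
    · -- cover
      intro u
      have himg : {y | quotArc N r (Quotient.mk (orbSetoid N) u) y}
          = (fun v => Quotient.mk (orbSetoid N) v) '' {v | r u v} := by
        ext y
        constructor
        · rintro ⟨hne, u', v', hu', hv', harc⟩
          obtain ⟨h, hh, e⟩ := (hmk u' u).1 hu'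
          refine ⟨h v', show r u (h v') from e ▸ hGarc h (hNG hh) u' v' harc, ?_⟩
          rw [← hv']
          exact ((hmk v' (h v')).2 ⟨h, hh, rfl⟩).symm
        · rintro ⟨v, hv, rfl⟩
          exact ⟨fun e => B2 u v hv ((hmk u v).1 e), u, v, rfl, rfl, hv⟩
      rw [himg, Set.ncard_image_of_injOn]
      intro a ha b hb e
      exact B1 u a b ha hb ((hmk a b).1 e)
    · -- at least three orbits
      have h1 : Quotient.mk (orbSetoid N) u0 ≠ Quotient.mk (orbSetoid N) x0 :=
        fun e => B2 u0 x0 hux0 ((hmk u0 x0).1 e)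
      have h2 : Quotient.mk (orbSetoid N) u0 ≠ Quotient.mk (orbSetoid N) y0 :=
        fun e => B2 u0 y0 huy0 ((hmk u0 y0).1 e)
      have h3 : Quotient.mk (orbSetoid N) x0 ≠ Quotient.mk (orbSetoid N) y0 :=
        fun e => hnxy ((hmk x0 y0).1 e)
      have : Fintype (Quotient (orbSetoid N)) := Fintype.ofFinite _
      rw [Nat.card_eq_fintype_card]
      exact Fintype.two_lt_card_iff.2 ⟨_, _, _, h1, h2, h3⟩
end

section
/- Let G be a finite group, let L be a normal subgroup of G, and let M be a subgroup of G with L ≤ M ≤ G. Suppose A and B are subsets of M \ {1} such that A^γ = B for some automorphism γ of M which fixes every coset of L in M setwise (i.e., x^γ ∈ xL for every x ∈ M), and suppose C ⊆ G \ L is a union of cosets of L in G. Then the Cayley digraphs Cay(G, A ∪ C) and Cay(G, B ∪ C) are isomorphic. -/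
section Aux
variable {G : Type*} [Group G] (M : Subgroup G)

noncomputable def cosetRep (g : G) : G :=
  (Quotient.mk (QuotientGroup.rightRel M) g).out

lemma cosetRep_mem (g : G) : g * (cosetRep M g)⁻¹ ∈ M := by
  have h : (QuotientGroup.rightRel M) (Quotient.mk (QuotientGroup.rightRel M) g).out g :=
    Quotient.mk_out g
  exact QuotientGroup.rightRel_apply.mp h

lemma cosetRep_eq {g g' : G} (h : g * g'⁻¹ ∈ M) : cosetRep M g = cosetRep M g' := by
  unfold cosetRep
  congr 1
  refine Quotient.sound (QuotientGroup.rightRel_apply.mpr ?_)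
  simpa [mul_inv_rev] using M.inv_mem h

noncomputable def cosetMap (γ : M ≃* M) (g : G) : G :=
  ((γ ⟨g * (cosetRep M g)⁻¹, cosetRep_mem M g⟩ : M) : G) * cosetRep M g

lemma cosetMap_of (γ : M ≃* M) {g t : G} (m : M) (hg : g = (m : G) * t)
    (ht : cosetRep M g = t) : cosetMap M γ g = ((γ m : M) : G) * t := by
  unfold cosetMap
  have hm : (⟨g * (cosetRep M g)⁻¹, cosetRep_mem M g⟩ : M) = m := by
    refine Subtype.ext ?_
    show g * (cosetRep M g)⁻¹ = (m : G)
    rw [ht, hg]; group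
  rw [hm, ht]

lemma cosetMap_mul (γ : M ≃* M) (s : G) (hs : s ∈ M) (g : G) :
    cosetMap M γ (s * g) = ((γ ⟨s, hs⟩ : M) : G) * cosetMap M γ g := by
  set t := cosetRep M g with htdef
  have hrep : cosetRep M (s * g) = t := cosetRep_eq M (by simpa using hs)
  have h1 : cosetMap M γ (s * g)
      = ((γ (⟨s, hs⟩ * ⟨g * t⁻¹, cosetRep_mem M g⟩) : M) : G) * t := by
    refine cosetMap_of M γ _ ?_ hrep
    push_cast; group
  have h2 : cosetMap M γ g = ((γ ⟨g * t⁻¹, cosetRep_mem M g⟩ : M) : G) * t :=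
    cosetMap_of M γ _ (by group) rfl
  rw [h1, h2, map_mul]
  push_cast; group

lemma cosetMap_leftInv (γ : M ≃* M) (g : G) :
    cosetMap M γ.symm (cosetMap M γ g) = g := by
  set t := cosetRep M g with htdef
  set m : M := ⟨g * t⁻¹, cosetRep_mem M g⟩ with hmdef
  have h2 : cosetMap M γ g = ((γ m : M) : G) * t := cosetMap_of M γ _ (by simp [hmdef]) rfl
  have hrep : cosetRep M (cosetMap M γ g) = t := by
    refine cosetRep_eq M ?_ |>.trans rfl
    rw [h2]
    have h3 : t * g⁻¹ ∈ M := by simpa [mul_inv_rev] using M.inv_mem (cosetRep_mem M g)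
    simpa [mul_assoc] using M.mul_mem (γ m).2 h3
  have := cosetMap_of M γ.symm (γ m) h2 hrep
  rw [this, MulEquiv.symm_apply_apply]
  simp [hmdef]

lemma cosetMap_rightInv (γ : M ≃* M) (g : G) :
    cosetMap M γ (cosetMap M γ.symm g) = g := by
  simpa using cosetMap_leftInv M γ.symm g

end Aux

theorem cayley_iso_of_coset_automorphism' (G : Type*) [Group G] [Fintype G]
    (L M : Subgroup G) (hL : L.Normal) (hLM : L ≤ M)
    (A B : Set G)
    (hA : A ⊆ (M : Set G) \ {1}) (hB : B ⊆ (M : Set G) \ {1})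
    (γ : M ≃* M)
    (hγfix : ∀ x : M, ((x : G))⁻¹ * ((γ x : M) : G) ∈ L)
    (hAB : (fun x : M => ((γ x : M) : G)) '' {x : M | (x : G) ∈ A} = B)
    (C : Set G) (hCdisj : ∀ c ∈ C, c ∉ L)
    (hCcoset : ∀ c ∈ C, ∀ l ∈ L, c * l ∈ C) :
    CayleyIso (A ∪ C) (B ∪ C) := by
  set e : G → G := cosetMap M γ with hedef
  -- e moves each point within its L-coset
  have hLmem : ∀ g : G, e g * g⁻¹ ∈ L := by
    intro g
    set t := cosetRep M g with htdef
    set m : M := ⟨g * t⁻¹, cosetRep_mem M g⟩ with hmdef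
    have h2 : e g = ((γ m : M) : G) * t := cosetMap_of M γ _ (by simp [hmdef]) rfl
    have key : e g * g⁻¹ = (m : G) * (((m : G))⁻¹ * ((γ m : M) : G)) * ((m : G))⁻¹ := by
      rw [h2]
      have : (m : G) = g * t⁻¹ := rfl
      rw [this]; group
    rw [key]
    exact hL.conj_mem _ (hγfix m) _
  have einj : Function.Injective e := by
    intro a b hab
    have := congrArg (cosetMap M γ.symm) hab
    rwa [hedef, cosetMap_leftInv, cosetMap_leftInv] at this
  refine ⟨⟨e, cosetMap M γ.symm, cosetMap_leftInv M γ, cosetMap_rightInv M γ⟩, fun u v => ?_⟩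
  simp only [Equiv.coe_fn_mk]
  constructor
  · rintro ⟨s, hs | hs, rfl⟩
    · -- s ∈ A
      have hsM : s ∈ M := (hA hs).1
      refine ⟨(γ ⟨s, hsM⟩ : M), Or.inl ?_, ?_⟩
      · rw [← hAB]; exact ⟨⟨s, hsM⟩, hs, rfl⟩
      · exact cosetMap_mul M γ s hsM u
    · -- s ∈ C
      have hl1 := hLmem u
      have hl2 := hLmem (s * u)
      refine ⟨(e (s * u) * (s * u)⁻¹) * s * (e u * u⁻¹)⁻¹, Or.inr ?_, by group⟩
      have hconj : s⁻¹ * (e (s * u) * (s * u)⁻¹) * s ∈ L := by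
        simpa using hL.conj_mem _ hl2 s⁻¹
      have : (e (s * u) * (s * u)⁻¹) * s * (e u * u⁻¹)⁻¹
          = s * ((s⁻¹ * (e (s * u) * (s * u)⁻¹) * s) * (e u * u⁻¹)⁻¹) := by group
      rw [this]
      exact hCcoset s hs _ (L.mul_mem hconj (L.inv_mem hl1))
  · rintro ⟨s, hs | hs, heq⟩
    · -- s ∈ B
      rw [← hAB] at hs
      obtain ⟨x, hxA, hγx⟩ := hs
      refine ⟨(x : G), Or.inl hxA, ?_⟩
      apply einj
      rw [heq]
      have := cosetMap_mul M γ (x : G) x.2 u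
      rw [hedef, this]
      congr 1
      rw [← hγx]
    · -- s ∈ C
      have hl1 := hLmem u
      have hl2 := hLmem v
      have hv : v = ((e v * v⁻¹)⁻¹ * s * (e u * u⁻¹)) * u := by
        rw [heq]; group
      refine ⟨(e v * v⁻¹)⁻¹ * s * (e u * u⁻¹), Or.inr ?_, hv⟩
      have hconj : s⁻¹ * (e v * v⁻¹)⁻¹ * s ∈ L := by
        simpa using hL.conj_mem _ (L.inv_mem hl2) s⁻¹
      have : (e v * v⁻¹)⁻¹ * s * (e u * u⁻¹)
          = s * ((s⁻¹ * (e v * v⁻¹)⁻¹ * s) * (e u * u⁻¹)) := by group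
      rw [this]
      exact hCcoset s hs _ (L.mul_mem hconj hl1)

/-- Lemma 2.6: let `G` be a finite group with `L ⊴ G` and `L ≤ M ≤ G`. Suppose `A` and
`B` are subsets of `M \ {1}` with `A^γ = B` for some automorphism `γ` of `M` fixing
every coset of `L` in `M`, and `C ⊆ G \ L` is a union of cosets of `L` in `G`. Then
`Cay(G, A ∪ C) ≅ Cay(G, B ∪ C)`. -/
theorem cayley_iso_of_coset_automorphism (G : Type*) [Group G] [Fintype G]
    (L M : Subgroup G) (hL : L.Normal) (hLM : L ≤ M)
    (A B : Set G)
    (hA : A ⊆ (M : Set G) \ {1}) (hB : B ⊆ (M : Set G) \ {1})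
    (γ : M ≃* M)
    (hγfix : ∀ x : M, ((x : G))⁻¹ * ((γ x : M) : G) ∈ L)
    (hAB : (fun x : M => ((γ x : M) : G)) '' {x : M | (x : G) ∈ A} = B)
    (C : Set G) (hCdisj : ∀ c ∈ C, c ∉ L)
    (hCcoset : ∀ c ∈ C, ∀ l ∈ L, c * l ∈ C) :
    CayleyIso (A ∪ C) (B ∪ C) :=
  cayley_iso_of_coset_automorphism' G L M hL hLM A B hA hB γ hγfix hAB C hCdisj hCcoset
end

section
/- Let n be an odd positive integer. Then the generalized quaternion group Q_{4n} of order 4n is homogeneous; that is, for any two subgroups H and K of Q_{4n} and any group isomorphism φ : H → K, there exists an automorphism of Q_{4n} whose restriction to H equals φ. -/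
namespace QuaternionHomogeneousAux

open QuaternionGroup

variable {n : ℕ}

/-- The canonical hom from `Multiplicative (ZMod (2n))` onto the `a`-part. -/
def aHom (n : ℕ) : Multiplicative (ZMod (2 * n)) →* QuaternionGroup n where
  toFun x := a x.toAdd
  map_one' := rfl
  map_mul' _ _ := rfl

lemma aHom_injective : Function.Injective (aHom n) := by
  intro x y h
  have h' : (a x.toAdd : QuaternionGroup n) = a y.toAdd := h
  exact Multiplicative.toAdd.injective (QuaternionGroup.a.inj h')

lemma orderOf_a_eq (i : ZMod (2 * n)) :
    orderOf (a i : QuaternionGroup n) = addOrderOf i := by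
  rw [← orderOf_ofAdd_eq_addOrderOf]
  calc orderOf (a i : QuaternionGroup n)
      = orderOf ((aHom n) (Multiplicative.ofAdd i)) := rfl
    _ = orderOf (Multiplicative.ofAdd i) :=
        orderOf_injective (aHom n) aHom_injective (Multiplicative.ofAdd i)

lemma a_zpow (m : ℤ) (t : ZMod (2 * n)) :
    (a t : QuaternionGroup n) ^ m = a (m • t) := by
  have := map_zpow (aHom n) (Multiplicative.ofAdd t) m
  rw [← ofAdd_zsmul] at this
  exact this.symm

lemma xa_inv (i : ZMod (2 * n)) : (xa i : QuaternionGroup n)⁻¹ = xa ((n : ZMod (2*n)) + i) := rfl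

lemma unit_mul_natCast_n [NeZero n] (r : (ZMod (2 * n))ˣ) :
    (r : ZMod (2 * n)) * (n : ZMod (2 * n)) = (n : ZMod (2 * n)) := by
  haveI : NeZero (2 * n) := ⟨by have := NeZero.pos n; omega⟩
  have hcop := ZMod.val_coe_unit_coprime r
  have hodd : ¬ 2 ∣ (r : ZMod (2 * n)).val := by
    intro h2
    have h2' : 2 ∣ 2 * n := ⟨n, rfl⟩
    have := Nat.eq_one_of_dvd_coprimes hcop h2 h2'
    omega
  obtain ⟨k, hk⟩ : ∃ k, (r : ZMod (2 * n)).val = 2 * k + 1 := by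
    rcases Nat.even_or_odd (r : ZMod (2 * n)).val with h | h
    · exact absurd h.two_dvd hodd
    · obtain ⟨k, hk⟩ := h; exact ⟨k, by omega⟩
  calc (r : ZMod (2 * n)) * (n : ZMod (2 * n))
      = (((r : ZMod (2 * n)).val : ℕ) : ZMod (2 * n)) * n := by rw [ZMod.natCast_zmod_val]
    _ = (((2 * k + 1) * n : ℕ) : ZMod (2 * n)) := by rw [hk]; push_cast; ring
    _ = ((n : ℕ) : ZMod (2 * n)) + ((k : ℕ) : ZMod (2 * n)) * (((2 * n : ℕ) : ℕ) : ZMod (2 * n)) := by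
        push_cast; ring
    _ = (n : ZMod (2 * n)) := by rw [ZMod.natCast_self]; ring

/-- The automorphism `a i ↦ a (r i)`, `xa i ↦ xa (r i + s)`. -/
def psi (r : (ZMod (2 * n))ˣ) (s : ZMod (2 * n))
    (hrn : (r : ZMod (2 * n)) * (n : ZMod (2 * n)) = (n : ZMod (2 * n))) :
    QuaternionGroup n ≃* QuaternionGroup n where
  toFun x := match x with
    | .a i => a ((r : ZMod (2 * n)) * i)
    | .xa i => xa ((r : ZMod (2 * n)) * i + s)
  invFun x := match x with
    | .a i => a (((r⁻¹ : (ZMod (2 * n))ˣ) : ZMod (2 * n)) * i)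
    | .xa i => xa (((r⁻¹ : (ZMod (2 * n))ˣ) : ZMod (2 * n)) * (i - s))
  left_inv := by
    rintro (i | i) <;> simp
  right_inv := by
    rintro (i | i) <;> simp [mul_sub, mul_add]
  map_mul' := by
    rintro (i | i) (j | j) <;>
      simp only [a_mul_a, a_mul_xa, xa_mul_a, xa_mul_xa, mul_add, mul_sub, hrn] <;>
      ring_nf


lemma exists_unit_mul_gcd {N : ℕ} [NeZero N] (x : ZMod N) :
    ∃ r : (ZMod N)ˣ, (r : ZMod N) * ((Nat.gcd x.val N : ℕ) : ZMod N) = x := by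
  have hN : 0 < N := NeZero.pos N
  set g := Nat.gcd x.val N with hg
  have hgdvd : g ∣ N := Nat.gcd_dvd_right _ _
  have hgx : g ∣ x.val := Nat.gcd_dvd_left _ _
  have gpos : 0 < g := Nat.gcd_pos_of_pos_right _ hN
  set c := x.val / g with hc
  have hcop : Nat.Coprime c (N / g) := Nat.coprime_div_gcd_div_gcd gpos
  have hNg : N / g ∣ N := Nat.div_dvd_of_dvd hgdvd
  haveI : NeZero (N / g) := ⟨(Nat.div_pos (Nat.le_of_dvd hN hgdvd) gpos).ne'⟩
  obtain ⟨r, hr⟩ := ZMod.unitsMap_surjective hNg (ZMod.unitOfCoprime c hcop)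
  refine ⟨r, ?_⟩
  have hr' : ((r : ZMod N).val : ZMod (N / g)) = (c : ZMod (N / g)) := by
    have := congrArg (Units.val) hr
    rw [ZMod.unitsMap_def] at this
    simp only [Units.coe_map, MonoidHom.coe_coe, ZMod.castHom_apply, ZMod.coe_unitOfCoprime] at this
    rw [ZMod.natCast_val, this]
  have hmod : (r : ZMod N).val ≡ c [MOD N / g] := (ZMod.natCast_eq_natCast_iff _ _ _).mp hr'
  have hmod2 : (r : ZMod N).val * g ≡ c * g [MOD (N / g) * g] := hmod.mul_right' g
  rw [Nat.div_mul_cancel hgdvd] at hmod2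
  rw [hc, Nat.div_mul_cancel hgx] at hmod2
  have : (((r : ZMod N).val * g : ℕ) : ZMod N) = ((x.val : ℕ) : ZMod N) :=
    (ZMod.natCast_eq_natCast_iff _ _ _).mpr hmod2
  rw [Nat.cast_mul, ZMod.natCast_zmod_val, ZMod.natCast_zmod_val] at this
  exact this

lemma exists_unit_mul_eq {N : ℕ} [NeZero N] {t u : ZMod N}
    (h : addOrderOf t = addOrderOf u) :
    ∃ r : (ZMod N)ˣ, (r : ZMod N) * t = u := by
  have hN : N ≠ 0 := NeZero.ne N
  have key : ∀ y : ZMod N, addOrderOf y = N / Nat.gcd y.val N := by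
    intro y
    conv_lhs => rw [← ZMod.natCast_zmod_val y]
    rw [ZMod.addOrderOf_coe _ hN, Nat.gcd_comm]
  have hgcd : Nat.gcd t.val N = Nat.gcd u.val N := by
    have h1 := key t
    have h2 := key u
    rw [h1, h2] at h
    have d1 : Nat.gcd t.val N ∣ N := Nat.gcd_dvd_right _ _
    have d2 : Nat.gcd u.val N ∣ N := Nat.gcd_dvd_right _ _
    have e1 : Nat.gcd t.val N = N / (N / Nat.gcd t.val N) :=
      (Nat.div_div_self d1 hN).symm
    have e2 : Nat.gcd u.val N = N / (N / Nat.gcd u.val N) :=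
      (Nat.div_div_self d2 hN).symm
    rw [e1, e2, h]
  obtain ⟨r₁, hr₁⟩ := exists_unit_mul_gcd t
  obtain ⟨r₂, hr₂⟩ := exists_unit_mul_gcd u
  refine ⟨r₂ * r₁⁻¹, ?_⟩
  rw [← hr₁, ← hr₂, hgcd]
  push_cast
  rw [mul_assoc, ← mul_assoc ((r₁⁻¹ : (ZMod N)ˣ) : ZMod N), Units.inv_mul, one_mul]

/-- If `ψ` agrees with `φ` on a set generating `H`, it agrees on all of `H`. -/
lemma agree_of_closure {G : Type*} [Group G] {H K : Subgroup G} (φ : H ≃* K)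
    (ψ : G ≃* G) (S : Set G) (hS : S ⊆ (H : Set G)) (hgen : H ≤ Subgroup.closure S)
    (hagree : ∀ x (hx : x ∈ S), ψ x = ((φ ⟨x, hS hx⟩ : K) : G)) :
    ∀ h : H, ψ (h : G) = ((φ h : K) : G) := by
  have hle : Subgroup.closure S ≤ H := (Subgroup.closure_le H).mpr hS
  intro h
  have hcl : (h : G) ∈ Subgroup.closure S := hgen h.2
  have main : ∀ (x : G) (hx : x ∈ Subgroup.closure S),
      ∀ (hmem : x ∈ H), ψ x = ((φ ⟨x, hmem⟩ : K) : G) := by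
    intro x hx
    induction hx using Subgroup.closure_induction with
    | mem x hxS => intro hmem; exact hagree x hxS
    | one =>
        intro hmem
        have : (⟨1, hmem⟩ : H) = 1 := rfl
        rw [map_one, this, map_one]; rfl
    | mul x y hx hy px py =>
        intro hmem
        have hxH : x ∈ H := hle hx
        have hyH : y ∈ H := hle hy
        have : (⟨x * y, hmem⟩ : H) = ⟨x, hxH⟩ * ⟨y, hyH⟩ := rfl
        rw [map_mul, px hxH, py hyH, this, map_mul]
        rfl
    | inv x hx px =>
        intro hmem
        have hxH : x ∈ H := hle hx
        have : (⟨x⁻¹, hmem⟩ : H) = (⟨x, hxH⟩ : H)⁻¹ := rfl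
        rw [map_inv, px hxH, this, map_inv]
        rfl
  have := main (h : G) hcl h.2
  simpa using this


theorem main (n : ℕ) (hpos : 0 < n) (hodd : Odd n)
    (H K : Subgroup (QuaternionGroup n)) (φ : H ≃* K) :
    ∃ ψ : QuaternionGroup n ≃* QuaternionGroup n,
      ∀ h : H, ψ (h : QuaternionGroup n) = ((φ h : K) : QuaternionGroup n) := by
  classical
  haveI : NeZero n := ⟨hpos.ne'⟩
  haveI : NeZero (2 * n) := ⟨by omega⟩
  have h4 : ¬ (4 ∣ 2 * n) := by obtain ⟨k, hk⟩ := hodd; omega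
  have ha_ord : ∀ i : ZMod (2 * n), orderOf (a i : QuaternionGroup n) ≠ 4 := by
    intro i hcon
    have hdvd : orderOf (a i : QuaternionGroup n) ∣ 2 * n := by
      apply orderOf_dvd_of_pow_eq_one
      have hai : (a i : QuaternionGroup n) = (a 1) ^ i.val := by
        rw [a_one_pow, ZMod.natCast_zmod_val]
      rw [hai, ← pow_mul, mul_comm i.val (2 * n), pow_mul, a_one_pow_n, one_pow]
    rw [hcon] at hdvd; exact h4 hdvd
  have hord : ∀ h : H,
      orderOf ((φ h : K) : QuaternionGroup n) = orderOf (h : QuaternionGroup n) := by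
    intro h
    rw [Subgroup.orderOf_coe, Subgroup.orderOf_coe]
    exact orderOf_injective φ.toMonoidHom φ.injective h
  have hY : ∀ (h : H) (i : ZMod (2 * n)), (h : QuaternionGroup n) = a i →
      ∃ j, ((φ h : K) : QuaternionGroup n) = a j := by
    intro h i hi
    cases hcoe : ((φ h : K) : QuaternionGroup n) with
    | a j => exact ⟨j, rfl⟩
    | xa j =>
        exfalso
        have h2 := hord h
        rw [hcoe, hi, orderOf_xa] at h2
        exact ha_ord i h2.symm
  have hX : ∀ (h : H) (i : ZMod (2 * n)), (h : QuaternionGroup n) = xa i →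
      ∃ j, ((φ h : K) : QuaternionGroup n) = xa j := by
    intro h i hi
    cases hcoe : ((φ h : K) : QuaternionGroup n) with
    | xa j => exact ⟨j, rfl⟩
    | a j =>
        exfalso
        have h2 := hord h
        rw [hcoe, hi, orderOf_xa] at h2
        exact ha_ord j h2
  -- the additive subgroup of indices of `a`-elements of `H`
  let Ha : AddSubgroup (ZMod (2 * n)) :=
    { carrier := {i | a i ∈ H}
      zero_mem' := H.one_mem
      add_mem' := fun hx hy => H.mul_mem hx hy
      neg_mem' := fun hx => H.inv_mem hx }
  obtain ⟨g₀, hg₀⟩ := IsAddCyclic.exists_generator (α := Ha)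
  set t := (g₀ : ZMod (2 * n)) with hts
  have htH : a t ∈ H := g₀.2
  have hmem_t : ∀ i : ZMod (2 * n), a i ∈ H → ∃ m : ℤ, m • t = i := by
    intro i hi
    obtain ⟨m, hm⟩ := AddSubgroup.mem_zmultiples_iff.mp (hg₀ ⟨i, hi⟩)
    exact ⟨m, congrArg Subtype.val hm⟩
  obtain ⟨u, hu⟩ := hY ⟨a t, htH⟩ t rfl
  have horder_tu : addOrderOf t = addOrderOf u := by
    have h2 := hord ⟨a t, htH⟩
    rw [hu] at h2
    rw [orderOf_a_eq, orderOf_a_eq] at h2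
    exact h2.symm
  obtain ⟨r, hr⟩ := exists_unit_mul_eq horder_tu
  have hrn := unit_mul_natCast_n (n := n) r
  by_cases hex : ∃ i₀, xa i₀ ∈ H
  · obtain ⟨i₀, hi₀⟩ := hex
    obtain ⟨j₀, hj₀⟩ := hX ⟨xa i₀, hi₀⟩ i₀ rfl
    refine ⟨psi r (j₀ - (r : ZMod (2 * n)) * i₀) hrn, ?_⟩
    refine agree_of_closure φ _ ({a t, xa i₀} : Set (QuaternionGroup n)) ?hS1 ?hgen1 ?hagree1
    case hS1 =>
      intro x hx
      rcases hx with rfl | rfl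
      exacts [htH, hi₀]
    case hgen1 =>
      have hacl : ∀ i : ZMod (2 * n), a i ∈ H →
          a i ∈ Subgroup.closure ({a t, xa i₀} : Set (QuaternionGroup n)) := by
        intro i hi
        obtain ⟨m, hm⟩ := hmem_t i hi
        rw [← hm, ← a_zpow]
        exact zpow_mem (Subgroup.subset_closure (by simp)) m
      intro x hxH
      cases x with
      | a i => exact hacl i hxH
      | xa i =>
          have harith : (n : ZMod (2 * n)) + ((n : ZMod (2 * n)) + i₀) - i = i₀ - i := by
            have h2n : (n : ZMod (2 * n)) + (n : ZMod (2 * n)) = 0 := by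
              have : ((2 * n : ℕ) : ZMod (2 * n)) = 0 := ZMod.natCast_self _
              push_cast at this
              linear_combination this
            linear_combination h2n
          have hq : a (i₀ - i) ∈ H := by
            have hmm := H.mul_mem hxH (H.inv_mem hi₀)
            have he : xa i * (xa i₀)⁻¹ = a (i₀ - i) := by
              rw [xa_inv, xa_mul_xa, harith]
            rwa [he] at hmm
          have hxa : xa i = a (i₀ - i) * xa i₀ := by
            rw [a_mul_xa]
            congr 1
            ring
          rw [hxa]
          exact mul_mem (hacl _ hq) (Subgroup.subset_closure (by simp))
    case hagree1 =>
      intro x hx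
      rcases hx with rfl | rfl
      · have h1 : psi r (j₀ - (r : ZMod (2 * n)) * i₀) hrn (a t)
            = a ((r : ZMod (2 * n)) * t) := rfl
        rw [h1, hr]
        exact hu.symm
      · have h1 : psi r (j₀ - (r : ZMod (2 * n)) * i₀) hrn (xa i₀)
            = xa ((r : ZMod (2 * n)) * i₀ + (j₀ - (r : ZMod (2 * n)) * i₀)) := rfl
        rw [h1]
        have h2 : (r : ZMod (2 * n)) * i₀ + (j₀ - (r : ZMod (2 * n)) * i₀) = j₀ := by ring
        rw [h2]
        exact hj₀.symm
  · refine ⟨psi r 0 hrn, ?_⟩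
    refine agree_of_closure φ _ ({a t} : Set (QuaternionGroup n)) ?hS2 ?hgen2 ?hagree2
    case hS2 =>
      intro x hx
      rw [Set.mem_singleton_iff] at hx
      subst hx
      exact htH
    case hgen2 =>
      intro x hxH
      cases x with
      | a i =>
          obtain ⟨m, hm⟩ := hmem_t i hxH
          rw [← hm, ← a_zpow]
          exact zpow_mem (Subgroup.subset_closure (by simp)) m
      | xa i => exact absurd ⟨i, hxH⟩ hex
    case hagree2 =>
      intro x hx
      rw [Set.mem_singleton_iff] at hx
      subst hx
      have h1 : psi r 0 hrn (a t) = a ((r : ZMod (2 * n)) * t) := rfl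
      rw [h1, hr]
      exact hu.symm

end QuaternionHomogeneousAux

/-- Lemma 2.5: for an odd positive integer `n`, the generalized quaternion group
`Q_{4n}` is homogeneous: every isomorphism between subgroups of `Q_{4n}` extends to an
automorphism of `Q_{4n}`. -/
theorem quaternion_homogeneous (n : ℕ) (hpos : 0 < n) (hodd : Odd n)
    (H K : Subgroup (QuaternionGroup n)) (φ : H ≃* K) :
    ∃ ψ : QuaternionGroup n ≃* QuaternionGroup n,
      ∀ h : H, ψ (h : QuaternionGroup n) = ((φ h : K) : QuaternionGroup n) :=
  QuaternionHomogeneousAux.main n hpos hodd H K φ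
end

section
/- Let G = ⟨z⟩ be a cyclic group of order n, and let i, j ∈ {1, 2, …, n−2}. If the sets {z, z², …, z^i} and {z^j, z^{2j}, …, z^{ij}} are equal, then j = 1. -/
/-- Lemma 2.3: let `G = ⟨z⟩` be a cyclic group of order `n` and `i, j ∈ {1, …, n-2}`.
If `{z, z², …, z^i} = {z^j, z^{2j}, …, z^{ij}}`, then `j = 1`. -/
theorem cyclic_power_segment_eq (G : Type*) [Group G] [Fintype G]
    (z : G) (n : ℕ) (hcard : Nat.card G = n)
    (hgen : ∀ g : G, g ∈ Subgroup.zpowers z)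
    (i j : ℕ) (hi1 : 1 ≤ i) (hi2 : i ≤ n - 2) (hj1 : 1 ≤ j) (hj2 : j ≤ n - 2)
    (hset : {g : G | ∃ k : ℕ, 1 ≤ k ∧ k ≤ i ∧ g = z ^ k} =
      {g : G | ∃ k : ℕ, 1 ≤ k ∧ k ≤ i ∧ g = z ^ (k * j)}) :
    j = 1 := by
  have hzgen : Subgroup.zpowers z = ⊤ := by
    ext g; simpa using hgen g
  have hn : orderOf z = n := by
    rw [← Nat.card_zpowers, hzgen, ← hcard]
    exact Nat.card_congr Subgroup.topEquiv.toEquiv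
  have hn3 : 3 ≤ n := by omega
  have hpow : ∀ a b : ℕ, z ^ a = z ^ b ↔ a % n = b % n := by
    intro a b
    rw [pow_eq_pow_iff_modEq, hn]
    exact Iff.rfl
  -- Step 1: j ≤ i
  have hij : j ≤ i := by
    have h1 : z ^ (1 * j) ∈ {g : G | ∃ k : ℕ, 1 ≤ k ∧ k ≤ i ∧ g = z ^ k} := by
      rw [hset]; exact ⟨1, le_refl 1, hi1, rfl⟩
    obtain ⟨m, hm1, hm2, hm3⟩ := h1
    have h2 := (hpow (1 * j) m).mp hm3
    rw [Nat.mod_eq_of_lt (by omega), Nat.mod_eq_of_lt (by omega)] at h2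
    omega
  -- Step 2: any r in the "zone" must be the residue of i*j
  have hkey : ∀ r : ℕ, 1 ≤ r → r ≤ i → i < r + j → r + j ≤ n → z ^ r = z ^ (i * j) := by
    intro r hr1 hr2 hr3 hr4
    have hrB : z ^ r ∈ {g : G | ∃ k : ℕ, 1 ≤ k ∧ k ≤ i ∧ g = z ^ (k * j)} := by
      rw [← hset]; exact ⟨r, hr1, hr2, rfl⟩
    obtain ⟨k, hk1, hk2, hk3⟩ := hrB
    rcases eq_or_lt_of_le hk2 with hk | hk
    · rw [hk3, hk]
    · exfalso
      have hB : z ^ ((k + 1) * j) ∈ {g : G | ∃ m : ℕ, 1 ≤ m ∧ m ≤ i ∧ g = z ^ m} := by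
        rw [hset]; exact ⟨k + 1, by omega, by omega, rfl⟩
      obtain ⟨m, hm1, hm2, hm3⟩ := hB
      have h1 : z ^ ((k + 1) * j) = z ^ (r + j) := by
        rw [add_mul, one_mul, pow_add, pow_add, ← hk3]
      have h2 : z ^ (r + j) = z ^ m := h1.symm.trans hm3
      have h3 := (hpow (r + j) m).mp h2
      rcases eq_or_lt_of_le hr4 with h | h
      · rw [h, Nat.mod_self, Nat.mod_eq_of_lt (by omega)] at h3
        omega
      · rw [Nat.mod_eq_of_lt h, Nat.mod_eq_of_lt (by omega)] at h3
        omega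
  -- Step 3: conclude
  by_contra hj
  have hj2' : 2 ≤ j := by omega
  have hr1def : min i (n - j) = min i (n - j) := rfl
  set r1 := min i (n - j) with hr1
  have e1 : z ^ r1 = z ^ (i * j) := hkey r1 (by omega) (by omega) (by omega) (by omega)
  have e2 : z ^ (r1 - 1) = z ^ (i * j) := hkey (r1 - 1) (by omega) (by omega) (by omega) (by omega)
  have h4 := (hpow r1 (r1 - 1)).mp (e1.trans e2.symm)
  rw [Nat.mod_eq_of_lt (by omega), Nat.mod_eq_of_lt (by omega)] at h4
  omega
end
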